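/- arXiv:2212.09391 — 9 statements merged into one kernel-verified Lean document; each statement's English description precedes it below -/
import Mathlib

section
/- For the rejective sampling model with parameter S and weights p_i ∈ (0,1) satisfying Σ_i p_i = S, the first order inclusion probability π_i = P_S(i ∈ I) satisfies π_i ≥ (1 - max_j p_j) · p_i for every i. -/
open Finset

/-- Poisson sampling probability of the sample `I`. -/
noncomputable def PB {N : ℕ} (p : Fin N → ℝ) (I : Finset (Fin N)) : ℝ :=
  (∏ i ∈ I, p i) * ∏ j ∈ Iᶜ, (1 - p j)

/-- Inclusion probability `π_L(S)` under rejective sampling with parameter `S`. -/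
noncomputable def incl {N : ℕ} (p : Fin N → ℝ) (S : ℕ) (L : Finset (Fin N)) : ℝ :=
  (∑ I ∈ univ.filter (fun I => I.card = S ∧ L ⊆ I), PB p I) /
  (∑ I ∈ univ.filter (fun I => I.card = S), PB p I)

namespace RejAux

variable {N : ℕ}

/-- Restricted Poisson-binomial weight sum over subsets of `E` of size `m`. -/
noncomputable def RR (p : Fin N → ℝ) (E : Finset (Fin N)) (m : ℕ) : ℝ :=
  ∑ J ∈ E.powersetCard m, (∏ j ∈ J, p j) * ∏ j ∈ E \ J, (1 - p j)

lemma term_nonneg {p : Fin N → ℝ} (hp : ∀ i, p i ∈ Set.Ioo (0:ℝ) 1)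
    (A B : Finset (Fin N)) : 0 ≤ (∏ j ∈ A, p j) * ∏ j ∈ B, (1 - p j) :=
  mul_nonneg (prod_nonneg fun j _ => (hp j).1.le)
    (prod_nonneg fun j _ => by linarith [(hp j).2])

lemma term_pos {p : Fin N → ℝ} (hp : ∀ i, p i ∈ Set.Ioo (0:ℝ) 1)
    (A B : Finset (Fin N)) : 0 < (∏ j ∈ A, p j) * ∏ j ∈ B, (1 - p j) :=
  mul_pos (prod_pos fun j _ => (hp j).1)
    (prod_pos fun j _ => by linarith [(hp j).2])

lemma RR_nonneg {p : Fin N → ℝ} (hp : ∀ i, p i ∈ Set.Ioo (0:ℝ) 1)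
    (E : Finset (Fin N)) (m : ℕ) : 0 ≤ RR p E m :=
  sum_nonneg fun J _ => term_nonneg hp _ _

lemma RR_pos {p : Fin N → ℝ} (hp : ∀ i, p i ∈ Set.Ioo (0:ℝ) 1)
    {E : Finset (Fin N)} {m : ℕ} (hm : m ≤ E.card) : 0 < RR p E m :=
  sum_pos (fun J _ => term_pos hp _ _) (powersetCard_nonempty.2 hm)

lemma erase_sdiff_erase {α : Type*} [DecidableEq α] {E J : Finset α} {k : α}
    (hkJ : k ∈ J) : (E.erase k) \ (J.erase k) = E \ J := by
  ext j
  by_cases hjk : j = k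
  · subst hjk; simp [hkJ]
  · simp [Finset.mem_sdiff, Finset.mem_erase, hjk]

lemma erase_le {p : Fin N → ℝ} (hp : ∀ i, p i ∈ Set.Ioo (0:ℝ) 1)
    {E : Finset (Fin N)} {k : Fin N} (hk : k ∈ E) (m : ℕ) :
    (1 - p k) * RR p (E.erase k) m ≤ RR p E m := by
  rw [RR, RR, mul_sum]
  refine le_trans (le_of_eq ?_)
    (sum_le_sum_of_subset_of_nonneg (powersetCard_mono (erase_subset k E))
      fun J _ _ => term_nonneg hp _ _)
  refine sum_congr rfl fun J hJ => ?_
  rw [mem_powersetCard] at hJ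
  have hkJ : k ∉ J := fun h => (mem_erase.1 (hJ.1 h)).1 rfl
  have hEJ : E \ J = insert k ((E.erase k) \ J) := by
    ext j
    by_cases hjk : j = k
    · subst hjk; simp [hk, hkJ]
    · simp [Finset.mem_sdiff, Finset.mem_erase, hjk]
  rw [hEJ, prod_insert (by simp [Finset.mem_sdiff])]
  ring

lemma identity (p : Fin N → ℝ) (E : Finset (Fin N)) (m : ℕ) :
    ((m + 1 : ℕ) : ℝ) * RR p E (m + 1) = ∑ k ∈ E, p k * RR p (E.erase k) m := by
  rw [RR, mul_sum]
  have h1 : ∀ J ∈ E.powersetCard (m + 1),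
      ((m + 1 : ℕ) : ℝ) * ((∏ j ∈ J, p j) * ∏ j ∈ E \ J, (1 - p j))
      = ∑ k ∈ E, (if k ∈ J then (∏ j ∈ J, p j) * ∏ j ∈ E \ J, (1 - p j) else 0) := by
    intro J hJ
    rw [mem_powersetCard] at hJ
    rw [Finset.sum_ite_mem, inter_eq_right.2 hJ.1, sum_const, hJ.2, nsmul_eq_mul]
  rw [sum_congr rfl h1, sum_comm]
  refine sum_congr rfl fun k hk => ?_
  rw [← sum_filter, RR, mul_sum]
  refine sum_bij' (fun J _ => J.erase k) (fun J _ => insert k J) ?_ ?_ ?_ ?_ ?_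
  · intro J hJ
    rw [mem_filter, mem_powersetCard] at hJ
    rw [mem_powersetCard]
    exact ⟨erase_subset_erase k hJ.1.1, by rw [card_erase_of_mem hJ.2, hJ.1.2]; omega⟩
  · intro J hJ
    rw [mem_powersetCard] at hJ
    have hkJ : k ∉ J := fun h => (mem_erase.1 (hJ.1 h)).1 rfl
    rw [mem_filter, mem_powersetCard]
    refine ⟨⟨insert_subset hk (hJ.1.trans (erase_subset _ _)), ?_⟩, mem_insert_self _ _⟩
    rw [card_insert_of_notMem hkJ, hJ.2]
  · intro J hJ
    rw [mem_filter] at hJ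
    exact insert_erase hJ.2
  · intro J hJ
    rw [mem_powersetCard] at hJ
    exact erase_insert fun h => (mem_erase.1 (hJ.1 h)).1 rfl
  · intro J hJ
    rw [mem_filter] at hJ
    have hkJ : k ∈ J := hJ.2
    rw [erase_sdiff_erase hkJ, ← Finset.mul_prod_erase J p hkJ]
    ring

lemma key {p : Fin N → ℝ} (hp : ∀ i, p i ∈ Set.Ioo (0:ℝ) 1)
    {E : Finset (Fin N)} {m : ℕ} {M : ℝ} (hM : ∀ j, p j ≤ M) (hM1 : M < 1)
    (hsum : ∑ k ∈ E, p k ≤ (m : ℝ) + 1) :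
    (1 - M) * RR p E (m + 1) ≤ RR p E m := by
  have step : ∀ k ∈ E, (1 - M) * (p k * RR p (E.erase k) m) ≤ p k * RR p E m := by
    intro k hk
    have h1 := erase_le hp hk m
    have h2 : (1 - M) * RR p (E.erase k) m ≤ (1 - p k) * RR p (E.erase k) m :=
      mul_le_mul_of_nonneg_right (by linarith [hM k]) (RR_nonneg hp _ _)
    calc (1 - M) * (p k * RR p (E.erase k) m)
        = p k * ((1 - M) * RR p (E.erase k) m) := by ring
      _ ≤ p k * RR p E m :=
        mul_le_mul_of_nonneg_left (h2.trans h1) (hp k).1.le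
  have h3 : (1 - M) * (((m + 1 : ℕ) : ℝ) * RR p E (m + 1)) ≤ ((m : ℝ) + 1) * RR p E m := by
    rw [identity, mul_sum]
    calc ∑ k ∈ E, (1 - M) * (p k * RR p (E.erase k) m)
        ≤ ∑ k ∈ E, p k * RR p E m := sum_le_sum step
      _ = (∑ k ∈ E, p k) * RR p E m := by rw [sum_mul]
      _ ≤ ((m : ℝ) + 1) * RR p E m :=
        mul_le_mul_of_nonneg_right hsum (RR_nonneg hp _ _)
  have hm1 : (0:ℝ) < (m : ℝ) + 1 := by positivity
  have h4 : ((m + 1 : ℕ) : ℝ) = (m : ℝ) + 1 := by push_cast; ring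
  rw [h4] at h3
  have h5 : ((m : ℝ) + 1) * ((1 - M) * RR p E (m + 1)) ≤ ((m : ℝ) + 1) * RR p E m := by
    linarith
  exact le_of_mul_le_mul_left h5 hm1

end RejAux

open RejAux in
theorem inclusion_prob_lower_bound {N S : ℕ} (p : Fin N → ℝ)
    (hp : ∀ i, p i ∈ Set.Ioo (0 : ℝ) 1) (hsum : ∑ i, p i = S) (i : Fin N) :
    incl p S {i} ≥ (1 - ⨆ j, p j) * p i := by
  classical
  have hN : Nonempty (Fin N) := ⟨i⟩
  set M := ⨆ j, p j with hMdef
  have hMle : ∀ j, p j ≤ M := fun j => le_ciSup (Set.Finite.bddAbove (Set.finite_range p)) j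
  obtain ⟨j0, _, hj0⟩ := Finset.exists_max_image univ p ⟨i, mem_univ i⟩
  have hM1 : M < 1 :=
    lt_of_le_of_lt (ciSup_le fun j => hj0 j (mem_univ j)) (hp j0).2
  have hMpos : 0 < M := lt_of_lt_of_le (hp i).1 (hMle i)
  set E := (univ : Finset (Fin N)).erase i with hEdef
  have hpos : (0:ℝ) < ∑ j, p j := sum_pos (fun j _ => (hp j).1) ⟨i, mem_univ i⟩
  have hS1 : 1 ≤ S := by
    rw [hsum] at hpos
    exact_mod_cast Nat.one_le_iff_ne_zero.2 (by exact_mod_cast hpos.ne')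
  obtain ⟨m, rfl⟩ : ∃ m, S = m + 1 := ⟨S - 1, by omega⟩
  have hsumE : ∑ k ∈ E, p k ≤ (m : ℝ) + 1 := by
    have h1 : p i + ∑ k ∈ E, p k = ∑ j, p j := Finset.add_sum_erase _ p (mem_univ i)
    have h2 : ((m + 1 : ℕ) : ℝ) = (m : ℝ) + 1 := by push_cast; ring
    rw [hsum, h2] at h1
    linarith [(hp i).1]
  have hkey := key hp hMle hM1 hsumE
  -- numerator
  have hnum : ∑ I ∈ univ.filter (fun I => I.card = m + 1 ∧ {i} ⊆ I), PB p I
      = p i * RR p E m := by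
    rw [RR, mul_sum]
    refine sum_bij' (fun J _ => J.erase i) (fun J _ => insert i J) ?_ ?_ ?_ ?_ ?_
    · intro I hI
      rw [mem_filter, singleton_subset_iff] at hI
      rw [mem_powersetCard]
      exact ⟨erase_subset_erase i (subset_univ I),
        by rw [card_erase_of_mem hI.2.2, hI.2.1]; omega⟩
    · intro J hJ
      rw [mem_powersetCard] at hJ
      have hiJ : i ∉ J := fun h => (mem_erase.1 (hJ.1 h)).1 rfl
      rw [mem_filter, singleton_subset_iff]
      exact ⟨mem_univ _, by rw [card_insert_of_notMem hiJ, hJ.2], mem_insert_self _ _⟩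
    · intro I hI
      rw [mem_filter, singleton_subset_iff] at hI
      exact insert_erase hI.2.2
    · intro J hJ
      rw [mem_powersetCard] at hJ
      exact erase_insert fun h => (mem_erase.1 (hJ.1 h)).1 rfl
    · intro I hI
      rw [mem_filter, singleton_subset_iff] at hI
      have hiI : i ∈ I := hI.2.2
      rw [PB, compl_eq_univ_sdiff, ← erase_sdiff_erase hiI, ← hEdef,
        ← Finset.mul_prod_erase I p hiI]
      ring
  -- denominator
  have hden : ∑ I ∈ univ.filter (fun I => I.card = m + 1), PB p I
      = p i * RR p E m + (1 - p i) * RR p E (m + 1) := by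
    rw [← sum_filter_add_sum_filter_not (univ.filter (fun I => I.card = m + 1))
      (fun I => i ∈ I) (PB p)]
    congr 1
    · rw [← hnum]
      apply sum_congr _ (fun _ _ => rfl)
      rw [filter_filter]
      apply filter_congr
      intro I _
      simp [singleton_subset_iff]
    · have hset : (univ.filter (fun I => I.card = m + 1)).filter (fun I => ¬ i ∈ I)
          = E.powersetCard (m + 1) := by
        rw [filter_filter]
        ext J
        simp only [mem_filter, mem_univ, true_and, mem_powersetCard, hEdef,
          subset_erase, subset_univ, true_and]
        tauto
      rw [hset, RR, mul_sum]
      refine sum_congr rfl fun J hJ => ?_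
      rw [mem_powersetCard] at hJ
      have hiJ : i ∉ J := fun h => (mem_erase.1 (hJ.1 h)).1 rfl
      have hcJ : Jᶜ = insert i (E \ J) := by
        ext j
        by_cases hji : j = i
        · subst hji; simp [hiJ]
        · simp [Finset.mem_sdiff, Finset.mem_erase, hji, hEdef]
      rw [PB, hcJ, prod_insert (by simp [Finset.mem_sdiff, hEdef])]
      ring
  have hScard : m + 1 ≤ E.card := by
    have hlt : ((m : ℝ) + 1) < N := by
      have h := sum_lt_sum_of_nonempty (⟨i, mem_univ i⟩ : (univ : Finset (Fin N)).Nonempty)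
        (fun j _ => (hp j).2)
      rw [hsum] at h
      push_cast at h
      simpa using h
    have hltN : m + 1 < N := by exact_mod_cast hlt
    have : E.card = N - 1 := by
      rw [hEdef, card_erase_of_mem (mem_univ i), card_univ, Fintype.card_fin]
    omega
  have hβpos : 0 < RR p E (m + 1) := RR_pos hp hScard
  have hαnn : 0 ≤ RR p E m := RR_nonneg hp _ _
  have hpi := hp i
  have hden_pos : 0 < p i * RR p E m + (1 - p i) * RR p E (m + 1) := by
    have h1 : 0 < (1 - p i) * RR p E (m + 1) := mul_pos (by linarith [hpi.2]) hβpos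
    nlinarith [mul_nonneg hpi.1.le hαnn]
  rw [ge_iff_le, incl, hnum, hden, le_div_iff₀ hden_pos]
  have hA : (p i * (1 - p i)) * ((1 - M) * RR p E (m + 1))
      ≤ (p i * (1 - p i)) * RR p E m :=
    mul_le_mul_of_nonneg_left hkey (by nlinarith [hpi.1, hpi.2])
  have hB : 0 ≤ M * (p i * (p i * RR p E m)) :=
    mul_nonneg hMpos.le (mul_nonneg hpi.1.le (mul_nonneg hpi.1.le hαnn))
  nlinarith [hA, hB]
end

section
/- For the rejective sampling model with parameter S and weights p_i ∈ (0,1) satisfying Σ_i p_i = S, the first order inclusion probability satisfies π_i ≤ 2 p_i for every i. -/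
open Finset

namespace RejAux

variable {N : ℕ}

noncomputable def W (p : Fin N → ℝ) (E : Finset (Fin N)) (k : ℕ) : ℝ :=
  ∑ J ∈ E.powersetCard k, (∏ j ∈ J, p j) * ∏ j ∈ E \ J, (1 - p j)

lemma W_empty_zero (p : Fin N → ℝ) : W p ∅ 0 = 1 := by
  simp [W]

lemma W_zero_of_card_lt (p : Fin N → ℝ) {E : Finset (Fin N)} {k : ℕ} (h : E.card < k) :
    W p E k = 0 := by
  simp [W, powersetCard_eq_empty.2 h]

lemma W_insert_zero (p : Fin N → ℝ) {a : Fin N} {E : Finset (Fin N)} (ha : a ∉ E) :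
    W p (insert a E) 0 = (1 - p a) * W p E 0 := by
  simp only [W, powersetCard_zero, sum_singleton, prod_empty, one_mul, sdiff_empty]
  rw [prod_insert ha]

lemma W_insert (p : Fin N → ℝ) {a : Fin N} {E : Finset (Fin N)} (ha : a ∉ E) (k : ℕ) :
    W p (insert a E) (k + 1) = p a * W p E k + (1 - p a) * W p E (k + 1) := by
  classical
  unfold W
  rw [powersetCard_succ_insert ha, sum_union, sum_image]
  · have h1 : ∀ J ∈ E.powersetCard (k + 1),
        (∏ j ∈ J, p j) * ∏ j ∈ insert a E \ J, (1 - p j)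
          = (1 - p a) * ((∏ j ∈ J, p j) * ∏ j ∈ E \ J, (1 - p j)) := by
      intro J hJ
      have hJE : J ⊆ E := (mem_powersetCard.1 hJ).1
      have haJ : a ∉ J := fun h => ha (hJE h)
      have : insert a E \ J = insert a (E \ J) := by
        ext x
        simp only [mem_sdiff, mem_insert]
        constructor
        · rintro ⟨hx | hx, hxJ⟩
          · exact Or.inl hx
          · exact Or.inr ⟨hx, hxJ⟩
        · rintro (rfl | ⟨hx, hxJ⟩)
          · exact ⟨Or.inl rfl, haJ⟩
          · exact ⟨Or.inr hx, hxJ⟩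
      rw [this, prod_insert (by simp [ha])]
      ring
    have h2 : ∀ J ∈ E.powersetCard k,
        (∏ j ∈ insert a J, p j) * ∏ j ∈ insert a E \ insert a J, (1 - p j)
          = p a * ((∏ j ∈ J, p j) * ∏ j ∈ E \ J, (1 - p j)) := by
      intro J hJ
      have hJE : J ⊆ E := (mem_powersetCard.1 hJ).1
      have haJ : a ∉ J := fun h => ha (hJE h)
      have hdiff : insert a E \ insert a J = E \ J := by
        ext x
        simp only [mem_sdiff, mem_insert, not_or]
        constructor
        · rintro ⟨hx | hx, hxa, hxJ⟩
          · exact absurd hx hxa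
          · exact ⟨hx, hxJ⟩
        · rintro ⟨hx, hxJ⟩
          exact ⟨Or.inr hx, fun h => ha (h ▸ hx), hxJ⟩
      rw [hdiff, prod_insert haJ]
      ring
    rw [sum_congr rfl h1, sum_congr rfl h2, ← mul_sum, ← mul_sum]
    ring
  · intro J hJ J' hJ' hEq
    have haJ : a ∉ J := fun h => ha ((mem_powersetCard.1 hJ).1 h)
    have haJ' : a ∉ J' := fun h => ha ((mem_powersetCard.1 hJ').1 h)
    have := congrArg (Finset.erase · a) hEq
    simpa [erase_insert haJ, erase_insert haJ'] using this
  · rw [disjoint_left]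
    intro J hJ hJ'
    obtain ⟨K, hK, rfl⟩ := mem_image.1 hJ'
    exact ha ((mem_powersetCard.1 hJ).1 (mem_insert_self a K))

lemma W_pos (p : Fin N → ℝ) (hp : ∀ i, p i ∈ Set.Ioo (0 : ℝ) 1) {E : Finset (Fin N)} {k : ℕ}
    (h : k ≤ E.card) : 0 < W p E k := by
  apply sum_pos
  · intro J hJ
    apply mul_pos
    · exact prod_pos fun j _ => (hp j).1
    · exact prod_pos fun j _ => by linarith [(hp j).2]
  · exact powersetCard_nonempty.2 h

lemma W_nonneg (p : Fin N → ℝ) (hp : ∀ i, p i ∈ Set.Ioo (0 : ℝ) 1) (E : Finset (Fin N)) (k : ℕ) :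
    0 ≤ W p E k := by
  rcases le_or_gt k E.card with h | h
  · exact (W_pos p hp h).le
  · simp [W_zero_of_card_lt p h]

lemma W_sum_one (p : Fin N → ℝ) (E : Finset (Fin N)) :
    ∀ M : ℕ, E.card < M → ∑ k ∈ range M, W p E k = 1 := by
  classical
  induction E using Finset.induction_on with
  | empty =>
    intro M hM
    obtain ⟨M', rfl⟩ := Nat.exists_eq_succ_of_ne_zero (by omega : M ≠ 0)
    rw [Finset.sum_range_succ']
    have : ∀ k ∈ range M', W p (∅ : Finset (Fin N)) (k + 1) = 0 := by
      intro k _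
      exact W_zero_of_card_lt p (by simp)
    rw [Finset.sum_congr rfl this]
    simp [W_empty_zero]
  | @insert a E ha IH =>
    intro M hM
    obtain ⟨M', rfl⟩ := Nat.exists_eq_succ_of_ne_zero (by omega : M ≠ 0)
    have hcard : E.card < M' := by
      rw [card_insert_of_notMem ha] at hM; omega
    rw [Finset.sum_range_succ']
    have hrw : ∀ k ∈ range M', W p (insert a E) (k + 1)
        = p a * W p E k + (1 - p a) * W p E (k + 1) := fun k _ => W_insert p ha k
    rw [Finset.sum_congr rfl hrw, sum_add_distrib, ← mul_sum, ← mul_sum, IH M' hcard,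
      W_insert_zero p ha]
    have hshift : ∑ k ∈ range M', W p E (k + 1) = 1 - W p E 0 := by
      have := IH (M' + 1) (by omega)
      rw [Finset.sum_range_succ'] at this
      linarith
    rw [hshift]
    ring

lemma W_mean (p : Fin N → ℝ) (E : Finset (Fin N)) :
    ∀ M : ℕ, E.card < M → ∑ k ∈ range M, (k : ℝ) * W p E k = ∑ j ∈ E, p j := by
  classical
  induction E using Finset.induction_on with
  | empty =>
    intro M hM
    obtain ⟨M', rfl⟩ := Nat.exists_eq_succ_of_ne_zero (by omega : M ≠ 0)
    rw [Finset.sum_range_succ']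
    have : ∀ k ∈ range M', ((k : ℝ) + 1) * W p (∅ : Finset (Fin N)) (k + 1) = 0 := by
      intro k _
      rw [W_zero_of_card_lt p (by simp), mul_zero]
    simp only [Nat.cast_add, Nat.cast_one]
    rw [Finset.sum_congr rfl this]
    simp
  | @insert a E ha IH =>
    intro M hM
    obtain ⟨M', rfl⟩ := Nat.exists_eq_succ_of_ne_zero (by omega : M ≠ 0)
    have hcard : E.card < M' := by
      rw [card_insert_of_notMem ha] at hM; omega
    rw [Finset.sum_range_succ']
    have hrw : ∀ k ∈ range M', ((k : ℝ) + 1) * W p (insert a E) (k + 1)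
        = p a * ((k : ℝ) * W p E k) + p a * W p E k
          + (1 - p a) * (((k : ℝ) + 1) * W p E (k + 1)) := by
      intro k _
      rw [W_insert p ha k]; ring
    simp only [Nat.cast_add, Nat.cast_one]
    rw [Finset.sum_congr rfl hrw]
    rw [sum_add_distrib, sum_add_distrib, ← mul_sum, ← mul_sum, ← mul_sum]
    rw [IH M' hcard, W_sum_one p E M' hcard]
    have hshift : ∑ k ∈ range M', ((k : ℝ) + 1) * W p E (k + 1) = ∑ j ∈ E, p j := by
      have := IH (M' + 1) (by omega)
      rw [Finset.sum_range_succ'] at this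
      simpa using this
    rw [hshift, sum_insert ha]
    ring

/-- From log-concavity plus the positivity pattern, the "cross" inequality. -/
lemma cross_of_logconc (q : ℕ → ℝ) (n : ℕ) (hpos : ∀ k ≤ n, 0 < q k)
    (hzero : ∀ k, n < k → q k = 0) (hlog : ∀ k, q k * q (k + 2) ≤ q (k + 1) ^ 2) (k : ℕ) :
    q k * q (k + 3) ≤ q (k + 1) * q (k + 2) := by
  have hnn : ∀ m, 0 ≤ q m := by
    intro m
    rcases le_or_gt m n with h | h
    · exact (hpos m h).le
    · simp [hzero m h]
  rcases le_or_gt (k + 3) n with h | h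
  · have h0 : 0 < q k := hpos k (by omega)
    have h1 : 0 < q (k + 1) := hpos _ (by omega)
    have h2 : 0 < q (k + 2) := hpos _ (by omega)
    have h3 : 0 < q (k + 3) := hpos _ (by omega)
    have hl1 := hlog k
    have hl2 := hlog (k + 1)
    have hY : 0 < q (k + 1) * q (k + 2) := mul_pos h1 h2
    have hXY : (q k * q (k + 3)) * (q (k + 1) * q (k + 2))
        ≤ (q (k + 1) * q (k + 2)) * (q (k + 1) * q (k + 2)) := by
      nlinarith [mul_le_mul hl1 hl2 (by positivity) (by positivity)]
    exact le_of_mul_le_mul_right hXY hY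
  · rw [hzero _ (by omega : n < k + 3), mul_zero]
    exact mul_nonneg (hnn _) (hnn _)

lemma W_logconc (p : Fin N → ℝ) (hp : ∀ i, p i ∈ Set.Ioo (0 : ℝ) 1) (E : Finset (Fin N)) :
    ∀ k, W p E k * W p E (k + 2) ≤ W p E (k + 1) ^ 2 := by
  classical
  induction E using Finset.induction_on with
  | empty =>
    intro k
    rw [W_zero_of_card_lt p (by simp : (∅ : Finset (Fin N)).card < k + 2), mul_zero]
    positivity
  | @insert a E ha IH =>
    intro k
    have hpa0 : (0 : ℝ) < p a := (hp a).1
    have hpa1 : p a < 1 := (hp a).2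
    have hnn := W_nonneg p hp E
    have hcross := cross_of_logconc (W p E) E.card
      (fun k hk => W_pos p hp hk) (fun k hk => W_zero_of_card_lt p hk) IH
    rcases k with _ | m
    · -- k = 0
      show W p (insert a E) 0 * W p (insert a E) (1 + 1) ≤ W p (insert a E) (0 + 1) ^ 2
      rw [W_insert_zero p ha, W_insert p ha 1, W_insert p ha 0]
      have h1 : W p E 0 * W p E (1 + 1) ≤ W p E (0 + 1) ^ 2 := IH 0
      simp only [show (0:ℕ) + 1 = 1 from rfl, show (1:ℕ) + 1 = 2 from rfl] at h1 ⊢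
      nlinarith [mul_le_mul_of_nonneg_left h1 (sq_nonneg (1 - p a)),
        mul_nonneg (mul_nonneg hpa0.le (by linarith : (0:ℝ) ≤ 1 - p a))
          (mul_nonneg (hnn 0) (hnn 1)),
        sq_nonneg (p a * W p E 0)]
    · -- k = m + 1
      show W p (insert a E) (m + 1) * W p (insert a E) (m + 2 + 1)
          ≤ W p (insert a E) (m + 1 + 1) ^ 2
      rw [W_insert p ha m, W_insert p ha (m + 1), W_insert p ha (m + 2)]
      have h1 : W p E m * W p E (m + 1 + 1) ≤ W p E (m + 1) ^ 2 := IH m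
      have h2 : W p E (m + 1) * W p E (m + 2 + 1) ≤ W p E (m + 1 + 1) ^ 2 := IH (m + 1)
      have h3 : W p E m * W p E (m + 2 + 1) ≤ W p E (m + 1) * W p E (m + 1 + 1) := hcross m
      simp only [show m + 1 + 1 = m + 2 from rfl, show m + 2 + 1 = m + 3 from rfl] at h1 h2 h3 ⊢
      nlinarith [mul_le_mul_of_nonneg_left h1 (sq_nonneg (p a)),
        mul_le_mul_of_nonneg_left h2 (sq_nonneg (1 - p a)),
        mul_le_mul_of_nonneg_left h3
          (mul_nonneg hpa0.le (by linarith : (0:ℝ) ≤ 1 - p a))]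

lemma geo_sum_bound {t : ℝ} (ht0 : 0 ≤ t) (ht1 : t < 1) (M : ℕ) :
    ∑ i ∈ range M, (i : ℝ) * t ^ i ≤ t / (1 - t) ^ 2 := by
  have hnorm : ‖t‖ < 1 := by rw [Real.norm_eq_abs, abs_of_nonneg ht0]; exact ht1
  have hs := hasSum_coe_mul_geometric_of_norm_lt_one (𝕜 := ℝ) hnorm
  rw [← hs.tsum_eq]
  exact Summable.sum_le_tsum (range M) (fun i _ => by positivity) hs.summable

lemma geo_sum_bound' {t : ℝ} (ht0 : 0 ≤ t) (ht1 : t < 1) (M : ℕ) :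
    ∑ i ∈ range M, ((i : ℝ) + 1) * t ^ (i + 1) ≤ t / (1 - t) ^ 2 := by
  have h := geo_sum_bound ht0 ht1 (M + 1)
  rw [Finset.sum_range_succ'] at h
  simpa using h

lemma geo_sum_bound'' {t : ℝ} (ht0 : 0 ≤ t) (ht1 : t < 1) (M : ℕ) :
    ∑ i ∈ range M, (i : ℝ) * t ^ (i + 1) ≤ t ^ 2 / (1 - t) ^ 2 := by
  have h := geo_sum_bound ht0 ht1 M
  have h2 : ∑ i ∈ range M, (i : ℝ) * t ^ (i + 1) = t * ∑ i ∈ range M, (i : ℝ) * t ^ i := by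
    rw [mul_sum]; apply sum_congr rfl; intros; ring
  rw [h2]
  calc t * ∑ i ∈ range M, (i : ℝ) * t ^ i ≤ t * (t / (1 - t) ^ 2) :=
        mul_le_mul_of_nonneg_left h ht0
    _ = t ^ 2 / (1 - t) ^ 2 := by ring

lemma final_contra {p t c : ℝ} (hp0 : 0 < p) (hp2 : p < 1/2) (ht0 : 0 < t) (ht12 : t < 1/2)
    (hc : 0 < c) (hA3 : 1 - p ≤ c * (t / (1 - t) ^ 2)) (hB : c ≤ p + c * (t ^ 2 / (1 - t) ^ 2))
    (hcase : t < (1 - 2*p) / (2*(1-p))) : False := by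
  have h1t : (0:ℝ) < 1 - t := by linarith
  have h12t : (0:ℝ) < 1 - 2*t := by linarith
  have hA' : (1 - p) * (1 - t) ^ 2 ≤ c * t := by
    have h := mul_le_mul_of_nonneg_right hA3 (by positivity : (0:ℝ) ≤ (1 - t) ^ 2)
    have he : c * (t / (1 - t) ^ 2) * (1 - t) ^ 2 = c * t := by field_simp
    linarith [h, he.le, he.ge]
  have hB' : c * (1 - 2*t) ≤ p * (1 - t) ^ 2 := by
    have h := mul_le_mul_of_nonneg_right hB (by positivity : (0:ℝ) ≤ (1 - t) ^ 2)
    have he : (p + c * (t ^ 2 / (1 - t) ^ 2)) * (1 - t) ^ 2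
        = p * (1 - t) ^ 2 + c * t ^ 2 := by field_simp
    nlinarith [h, he]
  have hstep : (1-p)*(1-t)^2*(1-2*t) ≤ (t*p) * (1-t)^2 := by
    have h1 := mul_le_mul_of_nonneg_right hA' h12t.le
    have h2 := mul_le_mul_of_nonneg_left hB' ht0.le
    nlinarith [h1, h2]
  have hd : (1-p)*(1-2*t) ≤ t*p := by
    have h3 : ((1-p)*(1-2*t)) * (1-t)^2 ≤ (t*p) * (1-t)^2 := by nlinarith [hstep]
    exact le_of_mul_le_mul_right h3 (by positivity)
  have hcase' : t * (2*(1-p)) < 1 - 2*p := by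
    rw [lt_div_iff₀ (by linarith : (0:ℝ) < 2*(1-p))] at hcase
    exact hcase
  nlinarith [mul_le_mul_of_nonneg_left hd (by linarith : (0:ℝ) ≤ 2*(1-p)),
    mul_lt_mul_of_pos_left hcase' (by linarith : (0:ℝ) < 2-p)]

/-- The key analytic inequality for a log-concave "Poisson-binomial like" sequence. -/
lemma key_s1 (n Sm : ℕ) (q : ℕ → ℝ) (p : ℝ) (hp0 : 0 < p) (hp1 : p < 1)
    (hSn : Sm + 1 ≤ n)
    (hpos : ∀ k ≤ n, 0 < q k) (hzero : ∀ k, n < k → q k = 0)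
    (hsum1 : ∑ k ∈ range (n + 1), q k = 1)
    (hmean : ∑ k ∈ range (n + 1), (k : ℝ) * q k = (Sm + 1 : ℝ) - p)
    (hlog : ∀ k, q k * q (k + 2) ≤ q (k + 1) ^ 2) :
    q Sm ≤ 2 * (p * q Sm + (1 - p) * q (Sm + 1)) := by
  have hnn : ∀ m, 0 ≤ q m := by
    intro m
    rcases le_or_gt m n with h | h
    · exact (hpos m h).le
    · simp [hzero m h]
  have hq0 : 0 < q Sm := hpos _ (by omega)
  have hq1 : 0 < q (Sm + 1) := hpos _ (by omega)
  rcases le_or_gt (1/2 : ℝ) p with hp2 | hp2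
  · nlinarith [mul_nonneg (by linarith : (0:ℝ) ≤ 2*p - 1) hq0.le,
      mul_nonneg (by linarith : (0:ℝ) ≤ 1 - p) hq1.le]
  · set t : ℝ := q (Sm + 1) / q Sm with ht_def
    have ht_pos : 0 < t := div_pos hq1 hq0
    have hqt : q (Sm + 1) = q Sm * t := by
      rw [ht_def, mul_div_cancel₀]
      exact hq0.ne'
    rcases le_or_gt ((1 - 2*p) / (2*(1-p))) t with hcase | hcase
    · have h2p : (0:ℝ) < 2*(1-p) := by linarith
      rw [div_le_iff₀ h2p] at hcase
      nlinarith [hq0]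
    · exfalso
      have ht12 : t < 1/2 := by
        have : (1 - 2*p) / (2*(1-p)) < 1/2 := by
          rw [div_lt_iff₀ (by linarith : (0:ℝ) < 2*(1-p))]
          linarith
        linarith
      have ht1 : t < 1 := by linarith
      have h1t : (0:ℝ) < 1 - t := by linarith
      -- ratio bound by induction
      have ratio : ∀ m, q (Sm + 1 + m + 1) * q Sm ≤ q (Sm + 1 + m) * q (Sm + 1) := by
        intro m
        induction m with
        | zero =>
          show q (Sm + 2) * q Sm ≤ q (Sm + 1) * q (Sm + 1)
          nlinarith [hlog Sm]
        | succ m ihm =>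
          show q (Sm + 1 + m + 2) * q Sm ≤ q (Sm + 1 + m + 1) * q (Sm + 1)
          rcases le_or_gt (Sm + 1 + m + 2) n with h | h
          · have hk : 0 < q (Sm + 1 + m) := hpos _ (by omega)
            have step1 : q (Sm + 1 + m) * (q (Sm + 1 + m + 2) * q Sm)
                ≤ q (Sm + 1 + m) * (q (Sm + 1 + m + 1) * q (Sm + 1)) := by
              nlinarith [mul_le_mul_of_nonneg_right (hlog (Sm + 1 + m)) hq0.le,
                mul_le_mul_of_nonneg_left ihm (hnn (Sm + 1 + m + 1))]
            exact le_of_mul_le_mul_left step1 hk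
          · rw [hzero _ (by omega), zero_mul]
            exact mul_nonneg (hnn _) (hnn _)
      -- geometric decay
      have geom : ∀ m, q (Sm + 1 + m) ≤ q Sm * t ^ (m + 1) := by
        intro m
        induction m with
        | zero => simp [hqt]
        | succ m ihm =>
          have h1 : q (Sm + 1 + m + 1) * q Sm ≤ (q Sm * t ^ (m + 1)) * (q Sm * t) := by
            calc q (Sm + 1 + m + 1) * q Sm ≤ q (Sm + 1 + m) * q (Sm + 1) := ratio m
              _ = q (Sm + 1 + m) * (q Sm * t) := by rw [hqt]
              _ ≤ (q Sm * t ^ (m + 1)) * (q Sm * t) := by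
                  apply mul_le_mul_of_nonneg_right ihm
                  positivity
          have h2 : q (Sm + 1 + (m + 1)) * q Sm ≤ (q Sm * t ^ (m + 1 + 1)) * q Sm := by
            calc q (Sm + 1 + (m + 1)) * q Sm = q (Sm + 1 + m + 1) * q Sm := by ring_nf
              _ ≤ (q Sm * t ^ (m + 1)) * (q Sm * t) := h1
              _ = (q Sm * t ^ (m + 1 + 1)) * q Sm := by ring
          exact le_of_mul_le_mul_right h2 hq0
      -- sum A : 1 - p ≤ upper tail
      have htot : ∑ k ∈ range (n + 1), ((k : ℝ) - Sm) * q k = 1 - p := by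
        have h : ∑ k ∈ range (n + 1), ((k : ℝ) - Sm) * q k
            = (∑ k ∈ range (n + 1), (k : ℝ) * q k) - (Sm : ℝ) * ∑ k ∈ range (n + 1), q k := by
          rw [mul_sum, ← sum_sub_distrib]
          apply sum_congr rfl; intros; ring
        rw [h, hmean, hsum1]; ring
      have hsplitA := sum_range_add_sum_Ico (fun k => ((k : ℝ) - Sm) * q k)
        (by omega : Sm + 1 ≤ n + 1)
      have hlowA : ∑ k ∈ range (Sm + 1), ((k : ℝ) - Sm) * q k ≤ 0 := by
        apply sum_nonpos
        intro k hk
        rw [mem_range] at hk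
        have : (k : ℝ) ≤ Sm := by exact_mod_cast Nat.lt_succ_iff.1 hk
        exact mul_nonpos_of_nonpos_of_nonneg (by linarith) (hnn k)
      have hA : 1 - p ≤ ∑ k ∈ Ico (Sm + 1) (n + 1), ((k : ℝ) - Sm) * q k := by
        linarith [hsplitA, htot, hlowA]
      rw [sum_Ico_eq_sum_range] at hA
      have hA2 : 1 - p ≤ ∑ i ∈ range (n + 1 - (Sm + 1)), ((i : ℝ) + 1) * q (Sm + 1 + i) := by
        refine le_trans hA (le_of_eq (sum_congr rfl fun i _ => ?_))
        push_cast
        ring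
      have hA3 : 1 - p ≤ q Sm * (t / (1 - t) ^ 2) := by
        calc 1 - p ≤ ∑ i ∈ range (n + 1 - (Sm + 1)), ((i : ℝ) + 1) * q (Sm + 1 + i) := hA2
          _ ≤ ∑ i ∈ range (n + 1 - (Sm + 1)), ((i : ℝ) + 1) * (q Sm * t ^ (i + 1)) := by
              apply sum_le_sum
              intro i _
              exact mul_le_mul_of_nonneg_left (geom i) (by positivity)
          _ = q Sm * ∑ i ∈ range (n + 1 - (Sm + 1)), ((i : ℝ) + 1) * t ^ (i + 1) := by
              rw [mul_sum]; apply sum_congr rfl; intros; ring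
          _ ≤ q Sm * (t / (1 - t) ^ 2) := by
              exact mul_le_mul_of_nonneg_left (geo_sum_bound' ht_pos.le ht1 _) hq0.le
      -- sum B : q Sm ≤ p + tail
      have htotB : ∑ k ∈ range (n + 1), ((Sm : ℝ) + 1 - k) * q k = p := by
        have h : ∑ k ∈ range (n + 1), ((Sm : ℝ) + 1 - k) * q k
            = ((Sm : ℝ) + 1) * (∑ k ∈ range (n + 1), q k)
              - ∑ k ∈ range (n + 1), (k : ℝ) * q k := by
          rw [mul_sum, ← sum_sub_distrib]
          apply sum_congr rfl; intros; ring
        rw [h, hmean, hsum1]; ring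
      have hsplitB := sum_range_add_sum_Ico (fun k => ((Sm : ℝ) + 1 - k) * q k)
        (by omega : Sm + 1 ≤ n + 1)
      have hlowB : q Sm ≤ ∑ k ∈ range (Sm + 1), ((Sm : ℝ) + 1 - k) * q k := by
        rw [Finset.sum_range_succ]
        have h1 : ((Sm : ℝ) + 1 - Sm) * q Sm = q Sm := by ring
        have h2 : (0:ℝ) ≤ ∑ k ∈ range Sm, ((Sm : ℝ) + 1 - k) * q k := by
          apply sum_nonneg
          intro k hk
          rw [mem_range] at hk
          have : (k : ℝ) ≤ Sm := by exact_mod_cast hk.le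
          exact mul_nonneg (by linarith) (hnn k)
        linarith
      have hupB : ∑ k ∈ Ico (Sm + 1) (n + 1), ((Sm : ℝ) + 1 - k) * q k
          ≥ -(q Sm * (t ^ 2 / (1 - t) ^ 2)) := by
        rw [sum_Ico_eq_sum_range]
        have heq : ∀ i ∈ range (n + 1 - (Sm + 1)),
            ((Sm : ℝ) + 1 - ((Sm + 1 + i : ℕ) : ℝ)) * q (Sm + 1 + i)
              = -((i : ℝ) * q (Sm + 1 + i)) := by
          intro i _
          push_cast
          ring
        rw [sum_congr rfl heq, sum_neg_distrib]
        have hb : ∑ i ∈ range (n + 1 - (Sm + 1)), (i : ℝ) * q (Sm + 1 + i)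
            ≤ q Sm * (t ^ 2 / (1 - t) ^ 2) := by
          calc ∑ i ∈ range (n + 1 - (Sm + 1)), (i : ℝ) * q (Sm + 1 + i)
              ≤ ∑ i ∈ range (n + 1 - (Sm + 1)), (i : ℝ) * (q Sm * t ^ (i + 1)) := by
                apply sum_le_sum
                intro i _
                exact mul_le_mul_of_nonneg_left (geom i) (by positivity)
            _ = q Sm * ∑ i ∈ range (n + 1 - (Sm + 1)), (i : ℝ) * t ^ (i + 1) := by
                rw [mul_sum]; apply sum_congr rfl; intros; ring
            _ ≤ q Sm * (t ^ 2 / (1 - t) ^ 2) :=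
                mul_le_mul_of_nonneg_left (geo_sum_bound'' ht_pos.le ht1 _) hq0.le
        linarith
      have hB : q Sm ≤ p + q Sm * (t ^ 2 / (1 - t) ^ 2) := by
        linarith [hsplitB, htotB, hlowB, hupB]
      exact final_contra hp0 hp2 ht_pos ht12 hq0 hA3 hB hcase

end RejAux

open RejAux in
theorem inclusion_prob_upper_bound {N S : ℕ} (p : Fin N → ℝ)
    (hp : ∀ i, p i ∈ Set.Ioo (0 : ℝ) 1) (hsum : ∑ i, p i = S) (i : Fin N) :
    incl p S {i} ≤ 2 * p i := by
  classical
  have hNpos : 0 < N := Fin.pos i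
  set E : Finset (Fin N) := univ.erase i with hE_def
  have hiE : i ∉ E := notMem_erase i univ
  have hcardE : E.card = N - 1 := by
    rw [hE_def, card_erase_of_mem (mem_univ i), card_univ, Fintype.card_fin]
  -- S bounds
  have hS_pos : 1 ≤ S := by
    by_contra h
    have hS0 : S = 0 := by omega
    have : (0:ℝ) < ∑ j, p j := by
      apply sum_pos (fun j _ => (hp j).1) ⟨i, mem_univ i⟩
    rw [hsum, hS0] at this
    norm_num at this
  have hSN : S < N := by
    have h1 : ∑ j, p j < ∑ _j : Fin N, (1:ℝ) :=
      sum_lt_sum_of_nonempty ⟨i, mem_univ i⟩ (fun j _ => (hp j).2)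
    rw [hsum] at h1
    simp only [sum_const, card_univ, Fintype.card_fin, nsmul_eq_mul, mul_one] at h1
    exact_mod_cast h1
  obtain ⟨T, rfl⟩ : ∃ T, S = T + 1 := ⟨S - 1, by omega⟩
  have hTn : T + 1 ≤ E.card := by omega
  have hpi0 : 0 < p i := (hp i).1
  have hpi1 : p i < 1 := (hp i).2
  -- numerator
  have hnum : ∑ I ∈ univ.filter (fun I => I.card = T + 1 ∧ ({i} : Finset (Fin N)) ⊆ I), PB p I
      = p i * W p E T := by
    rw [W, mul_sum]
    refine sum_bij' (fun I _ => I.erase i) (fun J _ => insert i J) ?_ ?_ ?_ ?_ ?_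
    · intro I hI
      rw [mem_filter] at hI
      obtain ⟨-, hIc, hiI⟩ := hI
      rw [singleton_subset_iff] at hiI
      rw [mem_powersetCard]
      constructor
      · exact erase_subset_erase i (subset_univ I)
      · rw [card_erase_of_mem hiI, hIc]
        omega
    · intro J hJ
      rw [mem_powersetCard] at hJ
      obtain ⟨hJE, hJc⟩ := hJ
      have hiJ : i ∉ J := fun h => hiE (hJE h)
      rw [mem_filter]
      refine ⟨mem_univ _, ?_, ?_⟩
      · rw [card_insert_of_notMem hiJ, hJc]
      · rw [singleton_subset_iff]; exact mem_insert_self i J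
    · intro I hI
      rw [mem_filter] at hI
      rw [singleton_subset_iff] at hI
      exact insert_erase hI.2.2
    · intro J hJ
      rw [mem_powersetCard] at hJ
      exact erase_insert (fun h => hiE (hJ.1 h))
    · intro I hI
      rw [mem_filter] at hI
      obtain ⟨-, hIc, hiI⟩ := hI
      rw [singleton_subset_iff] at hiI
      rw [PB]
      have h1 : ∏ j ∈ I, p j = p i * ∏ j ∈ I.erase i, p j := (mul_prod_erase I p hiI).symm
      have h2 : Iᶜ = E \ I.erase i := by
        ext x
        simp only [mem_compl, mem_sdiff, hE_def, mem_erase, mem_univ, and_true, true_and]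
        constructor
        · intro hx
          exact ⟨fun h => hx (h ▸ hiI), fun h => hx h.2⟩
        · rintro ⟨hxi, hx⟩ hxI
          exact hx ⟨hxi, hxI⟩
      rw [h1, h2]
      ring
  -- denominator
  have hden : ∑ I ∈ univ.filter (fun I => I.card = T + 1), PB p I
      = p i * W p E T + (1 - p i) * W p E (T + 1) := by
    rw [← sum_filter_add_sum_filter_not (univ.filter (fun I => I.card = T + 1))
      (fun I => i ∈ I) (PB p)]
    congr 1
    · rw [filter_filter]
      rw [← hnum]
      apply sum_congr _ (fun _ _ => rfl)
      apply filter_congr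
      intro I _
      simp [singleton_subset_iff, and_comm]
    · rw [W, mul_sum]
      refine sum_bij' (fun I _ => I) (fun J _ => J) ?_ ?_ ?_ ?_ ?_
      · intro I hI
        rw [mem_filter, mem_filter] at hI
        obtain ⟨⟨-, hIc⟩, hiI⟩ := hI
        rw [mem_powersetCard]
        refine ⟨fun x hx => ?_, hIc⟩
        rw [hE_def, mem_erase]
        exact ⟨fun h => hiI (h ▸ hx), mem_univ x⟩
      · intro J hJ
        rw [mem_powersetCard] at hJ
        obtain ⟨hJE, hJc⟩ := hJ
        rw [mem_filter, mem_filter]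
        exact ⟨⟨mem_univ _, hJc⟩, fun h => hiE (hJE h)⟩
      · intro I _; rfl
      · intro J _; rfl
      · intro I hI
        rw [mem_filter, mem_filter] at hI
        obtain ⟨⟨-, hIc⟩, hiI⟩ := hI
        rw [PB]
        have h2 : Iᶜ = insert i (E \ I) := by
          ext x
          simp only [mem_compl, mem_insert, mem_sdiff, hE_def, mem_erase, mem_univ, and_true,
            true_and]
          constructor
          · intro hx
            rcases eq_or_ne x i with h | h
            · exact Or.inl h
            · exact Or.inr ⟨h, hx⟩
          · rintro (rfl | ⟨-, hx⟩)
            · exact hiI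
            · exact hx
        have hiEI : i ∉ E \ I := fun h => hiE (mem_sdiff.1 h).1
        rw [h2, prod_insert hiEI]
        ring
  -- conclude
  have hq := key_s1 E.card T (W p E) (p i) hpi0 hpi1 hTn
    (fun k hk => W_pos p hp hk) (fun k hk => W_zero_of_card_lt p hk)
    (W_sum_one p E (E.card + 1) (Nat.lt_succ_self _))
    (by
      rw [W_mean p E (E.card + 1) (Nat.lt_succ_self _)]
      have : ∑ j ∈ E, p j + p i = ∑ j, p j := sum_erase_add univ p (mem_univ i)
      rw [hsum] at this
      push_cast at this ⊢
      linarith)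
    (W_logconc p hp E)
  have hD : 0 < p i * W p E T + (1 - p i) * W p E (T + 1) := by
    have h1 : 0 < W p E T := W_pos p hp (by omega)
    have h2 : 0 < W p E (T + 1) := W_pos p hp hTn
    have : 0 < 1 - p i := by linarith
    positivity
  rw [incl, hnum, hden, div_le_iff₀ hD]
  have h1 : 0 < W p E T := W_pos p hp (by omega)
  nlinarith [hq, hpi0]
end

section
/- For rejective sampling with parameter S and weights p_i ∈ (0,1), the inclusion probabilities are negatively associated in the sense that π_{L∪M}(S) ≤ π_L(S) · π_M(S) for any disjoint subsets L, M ⊆ [N]. -/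
open Finset

namespace RejAux

variable {N : ℕ}

/-- Elementary symmetric sum of the weights `w` on `A` of degree `k`. -/
noncomputable def E (w : Fin N → ℝ) (A : Finset (Fin N)) (k : ℕ) : ℝ :=
  ∑ I ∈ A.powersetCard k, ∏ i ∈ I, w i

variable {w : Fin N → ℝ}

lemma E_nonneg (hw : ∀ i, 0 < w i) (A : Finset (Fin N)) (k : ℕ) : 0 ≤ E w A k :=
  Finset.sum_nonneg fun _ _ => Finset.prod_nonneg fun i _ => (hw i).le

lemma E_zero (A : Finset (Fin N)) : E w A 0 = 1 := by
  simp [E, Finset.powersetCard_zero]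

lemma E_pos (hw : ∀ i, 0 < w i) {A : Finset (Fin N)} {k : ℕ} (h : k ≤ A.card) :
    0 < E w A k :=
  Finset.sum_pos (fun _ _ => Finset.prod_pos fun i _ => hw i)
    (Finset.powersetCard_nonempty.2 h)

lemma E_eq_zero {A : Finset (Fin N)} {k : ℕ} (h : A.card < k) : E w A k = 0 := by
  simp [E, Finset.powersetCard_eq_empty.2 h]

lemma E_insert {x : Fin N} {A : Finset (Fin N)} (hx : x ∉ A) (k : ℕ) :
    E w (insert x A) (k + 1) = E w A (k + 1) + w x * E w A k := by
  unfold E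
  rw [powersetCard_succ_insert hx k, sum_union, sum_image, mul_sum]
  · congr 1
    refine sum_congr rfl fun I hI => ?_
    have hxI : x ∉ I := fun hxI => hx ((mem_powersetCard.1 hI).1 hxI)
    rw [prod_insert hxI]
  · intro I hI J hJ h
    have hxI : x ∉ I := fun h' => hx ((mem_powersetCard.1 hI).1 h')
    have hxJ : x ∉ J := fun h' => hx ((mem_powersetCard.1 hJ).1 h')
    have := congrArg (fun s => Finset.erase s x) h
    simpa [Finset.erase_insert hxI, Finset.erase_insert hxJ] using this
  · rw [Finset.disjoint_left]
    intro I hI hI'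
    obtain ⟨J, hJ, rfl⟩ := Finset.mem_image.1 hI'
    exact hx ((mem_powersetCard.1 hI).1 (Finset.mem_insert_self x J))

lemma newton (hw : ∀ i, 0 < w i) (A : Finset (Fin N)) :
    ∀ k, E w A k * E w A (k + 2) ≤ E w A (k + 1) ^ 2 := by
  classical
  induction A using Finset.induction with
  | empty =>
    intro k
    rw [show E w (∅ : Finset (Fin N)) (k + 2) = 0 from E_eq_zero (by simp), mul_zero]
    positivity
  | @insert x A hx ih =>
    have cross : ∀ k, E w A k * E w A (k + 3) ≤ E w A (k + 1) * E w A (k + 2) := by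
      intro k
      by_cases h : k + 2 ≤ A.card
      · have hp1 : 0 < E w A (k + 1) := E_pos hw (by omega)
        have hp2 : 0 < E w A (k + 2) := E_pos hw h
        have h1 := ih k
        have h2 := ih (k + 1)
        have hn0 := E_nonneg hw A k
        have hn3 := E_nonneg hw A (k + 3)
        have key : (E w A k * E w A (k + 3)) * (E w A (k + 1) * E w A (k + 2)) ≤
            (E w A (k + 1) * E w A (k + 2)) * (E w A (k + 1) * E w A (k + 2)) := by
          have hm : (E w A k * E w A (k + 2)) * (E w A (k + 1) * E w A (k + 3)) ≤
              E w A (k + 1) ^ 2 * E w A (k + 2) ^ 2 :=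
            mul_le_mul h1 h2 (mul_nonneg hp1.le hn3) (by positivity)
          nlinarith [hm]
        exact le_of_mul_le_mul_right key (mul_pos hp1 hp2)
      · rw [E_eq_zero (show A.card < k + 3 by omega), mul_zero]
        exact mul_nonneg (E_nonneg hw A _) (E_nonneg hw A _)
    intro k
    cases k with
    | zero =>
      rw [E_zero, one_mul, show (0:ℕ) + 2 = 1 + 1 from rfl, E_insert hx 1, E_insert hx 0,
        E_zero]
      have h0 := ih 0
      rw [E_zero, one_mul] at h0
      nlinarith [hw x, E_nonneg hw A 1, E_nonneg hw A 2]
    | succ k =>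
      rw [show k + 1 + 2 = (k + 2) + 1 from rfl, show k + 1 + 1 = (k + 1) + 1 from rfl,
        E_insert hx k, E_insert hx (k + 1), E_insert hx (k + 2)]
      have h1 := ih k
      have h2 := ih (k + 1)
      have h3 := cross k
      have hwx := hw x
      nlinarith [mul_le_mul_of_nonneg_left h1 (mul_pos hwx hwx).le,
        mul_le_mul_of_nonneg_left h3 hwx.le, h2]

lemma chain (hw : ∀ i, 0 < w i) (A : Finset (Fin N)) :
    ∀ d a, E w A a * E w A (a + d + 1) ≤ E w A (a + 1) * E w A (a + d) := by
  intro d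
  induction d with
  | zero =>
    intro a
    rw [add_zero, mul_comm]
  | succ d ih =>
    intro a
    have e1 : a + (d + 1) + 1 = a + d + 2 := by omega
    have e2 : a + (d + 1) = a + d + 1 := by omega
    rw [e1, e2]
    by_cases h : a + d + 1 ≤ A.card
    · have hp : 0 < E w A (a + d + 1) := E_pos hw h
      have h1 := ih a
      have h2 := newton hw A (a + d)
      have key : (E w A a * E w A (a + d + 2)) * E w A (a + d + 1) ≤
          (E w A (a + 1) * E w A (a + d + 1)) * E w A (a + d + 1) := by
        have t1 := mul_le_mul_of_nonneg_right h1 (E_nonneg hw A (a + d + 2))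
        have t2 := mul_le_mul_of_nonneg_left h2 (E_nonneg hw A (a + 1))
        nlinarith [t1, t2]
      exact le_of_mul_le_mul_right key hp
    · rw [E_eq_zero (show A.card < a + d + 2 by omega), mul_zero]
      exact mul_nonneg (E_nonneg hw A _) (E_nonneg hw A _)

lemma rebal (hw : ∀ i, 0 < w i) (A : Finset (Fin N)) :
    ∀ c d i, E w A i * E w A (i + c + d) ≤ E w A (i + c) * E w A (i + d) := by
  intro c
  induction c with
  | zero => intro d i; rw [add_zero]
  | succ c ih =>
    intro d i
    cases d with
    | zero => simp only [add_zero]; rw [mul_comm]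
    | succ d =>
      have h1 := chain hw A (c + d + 1) i
      have h2 := ih d (i + 1)
      rw [show i + (c + d + 1) + 1 = i + c + d + 2 from by omega,
        show i + (c + d + 1) = i + c + d + 1 from by omega] at h1
      rw [show i + 1 + c + d = i + c + d + 1 from by omega,
        show i + 1 + c = i + c + 1 from by omega,
        show i + 1 + d = i + d + 1 from by omega] at h2
      rw [show i + (c + 1) + (d + 1) = i + c + d + 2 from by omega,
        show i + (c + 1) = i + c + 1 from by omega,
        show i + (d + 1) = i + d + 1 from by omega]
      exact le_trans h1 h2

lemma E_union_antidiag (A : Finset (Fin N)) :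
    ∀ (B : Finset (Fin N)) (n : ℕ), Disjoint A B →
      E w (A ∪ B) n = ∑ p ∈ Finset.HasAntidiagonal.antidiagonal n, E w A p.1 * E w B p.2 := by
  classical
  induction A using Finset.induction with
  | empty =>
    intro B n _
    rw [Finset.empty_union]
    rw [Finset.sum_eq_single_of_mem (0, n) (by simp)]
    · rw [E_zero, one_mul]
    · rintro ⟨a, b⟩ hp hne
      have hab : a + b = n := by simpa using Finset.HasAntidiagonal.mem_antidiagonal.1 hp
      have ha : 0 < a := by
        rcases Nat.eq_zero_or_pos a with h | h
        · exact absurd (by simp [h, ← hab]) hne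
        · exact h
      rw [E_eq_zero (by simpa using ha), zero_mul]
  | @insert x A hx ih =>
    intro B n hdisj
    have hxB : x ∉ B := fun h =>
      (Finset.disjoint_left.1 hdisj) (Finset.mem_insert_self x A) h
    have hAB : Disjoint A B := hdisj.mono_left (Finset.subset_insert x A)
    have hxAB : x ∉ A ∪ B := by simp [hx, hxB]
    rw [Finset.insert_union]
    cases n with
    | zero => simp [E_zero]
    | succ n =>
      rw [E_insert hxAB n, ih B (n + 1) hAB, ih B n hAB,
        Finset.Nat.sum_antidiagonal_succ
          (f := fun p => E w (insert x A) p.1 * E w B p.2),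
        Finset.Nat.sum_antidiagonal_succ (f := fun p => E w A p.1 * E w B p.2)]
      dsimp only
      rw [E_zero, E_zero, one_mul, mul_sum]
      have : ∀ p ∈ Finset.HasAntidiagonal.antidiagonal n,
          E w (insert x A) (p.1 + 1) * E w B p.2 =
          E w A (p.1 + 1) * E w B p.2 + w x * (E w A p.1 * E w B p.2) := by
        intro p _
        rw [E_insert hx p.1]
        ring
      rw [Finset.sum_congr rfl this, Finset.sum_add_distrib]
      ring

lemma E_union (hw : ∀ i, 0 < w i) {A B : Finset (Fin N)} (hd : Disjoint A B) {n : ℕ}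
    (hn : A.card ≤ n) :
    E w (A ∪ B) n = ∑ a ∈ Finset.range (A.card + 1), E w A a * E w B (n - a) := by
  rw [E_union_antidiag A B n hd,
    Finset.Nat.sum_antidiagonal_eq_sum_range_succ_mk]
  refine (Finset.sum_subset (Finset.range_subset_range.2 (by omega)) ?_).symm
  intro a ha' ha
  have hcard : A.card < a := by
    simp only [Finset.mem_range] at ha' ha; omega
  rw [E_eq_zero hcard, zero_mul]

lemma key_ineq (hw : ∀ i, 0 < w i) {L M : Finset (Fin N)} (hLM : Disjoint L M) {S : ℕ}
    (hlm : L.card + M.card ≤ S) :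
    E w ((L ∪ M)ᶜ) (S - L.card - M.card) * E w univ S ≤
      E w Lᶜ (S - L.card) * E w Mᶜ (S - M.card) := by
  classical
  set l := L.card
  set m := M.card
  set C := (L ∪ M)ᶜ with hC
  have hdMC : Disjoint M C := (disjoint_compl_right).mono_left subset_union_right
  have hdLC : Disjoint L C := (disjoint_compl_right).mono_left subset_union_left
  have hdL : Disjoint L (M ∪ C) := Finset.disjoint_union_right.2 ⟨hLM, hdLC⟩
  have hLc : Lᶜ = M ∪ C := by
    ext x
    have hd : x ∈ L → x ∉ M := fun h1 h2 => Finset.disjoint_left.1 hLM h1 h2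
    simp only [hC, Finset.mem_compl, Finset.mem_union]
    tauto
  have hMc : Mᶜ = L ∪ C := by
    ext x
    have hd : x ∈ L → x ∉ M := fun h1 h2 => Finset.disjoint_left.1 hLM h1 h2
    simp only [hC, Finset.mem_compl, Finset.mem_union]
    tauto
  have hU : (univ : Finset (Fin N)) = L ∪ (M ∪ C) := by
    rw [← Finset.union_assoc, hC, Finset.union_compl]
  -- expand E univ S
  have hUS : E w univ S = ∑ a ∈ Finset.range (l + 1), ∑ b ∈ Finset.range (m + 1),
      E w L a * (E w M b * E w C (S - a - b)) := by
    rw [hU, E_union hw hdL (by omega)]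
    refine Finset.sum_congr rfl fun a ha => ?_
    have ha' : a ≤ l := by simpa [Nat.lt_succ_iff] using ha
    rw [E_union hw hdMC (by omega), Finset.mul_sum]
  have hLcS : E w Lᶜ (S - l) = ∑ b ∈ Finset.range (m + 1), E w M b * E w C (S - l - b) := by
    rw [hLc, E_union hw hdMC (by omega)]
  have hMcS : E w Mᶜ (S - m) = ∑ a ∈ Finset.range (l + 1), E w L a * E w C (S - m - a) := by
    rw [hMc, E_union hw hdLC (by omega)]
  rw [hUS, hLcS, hMcS, Finset.mul_sum, Finset.sum_mul_sum]
  rw [Finset.sum_comm]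
  refine Finset.sum_le_sum fun a ha => ?_
  rw [Finset.mul_sum]
  refine Finset.sum_le_sum fun b hb => ?_
  have ha' : a ≤ l := by simpa [Nat.lt_succ_iff] using ha
  have hb' : b ≤ m := by simpa [Nat.lt_succ_iff] using hb
  have reb := rebal hw C (m - b) (l - a) (S - l - m)
  have e1 : S - l - m + (m - b) + (l - a) = S - a - b := by omega
  have e2 : S - l - m + (m - b) = S - l - b := by omega
  have e3 : S - l - m + (l - a) = S - m - a := by omega
  rw [e1, e2, e3] at reb
  have hnn : 0 ≤ E w L a * E w M b := mul_nonneg (E_nonneg hw L a) (E_nonneg hw M b)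
  have := mul_le_mul_of_nonneg_left reb hnn
  nlinarith [this]

end RejAux

open RejAux

theorem inclusion_prob_negatively_associated {N S : ℕ} (p : Fin N → ℝ)
    (hp : ∀ i, p i ∈ Set.Ioo (0 : ℝ) 1) (hS : S ≤ N)
    (L M : Finset (Fin N)) (hLM : Disjoint L M) :
    incl p S (L ∪ M) ≤ incl p S L * incl p S M := by
  classical
  set w : Fin N → ℝ := fun i => p i / (1 - p i) with hwdef
  have hp1 : ∀ i, 0 < 1 - p i := fun i => by linarith [(hp i).2]
  have hw : ∀ i, 0 < w i := fun i => div_pos (hp i).1 (hp1 i)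
  set c : ℝ := ∏ j, (1 - p j) with hcdef
  have hc : 0 < c := Finset.prod_pos fun j _ => hp1 j
  -- PB in terms of w
  have hPB : ∀ I : Finset (Fin N), PB p I = c * ∏ i ∈ I, w i := by
    intro I
    have h1 : c = (∏ i ∈ I, (1 - p i)) * ∏ i ∈ Iᶜ, (1 - p i) :=
      (Finset.prod_mul_prod_compl I _).symm
    rw [PB, h1]
    rw [show (∏ i ∈ I, (1 - p i)) * (∏ i ∈ Iᶜ, (1 - p i)) * ∏ i ∈ I, w i
        = ((∏ i ∈ I, (1 - p i)) * ∏ i ∈ I, w i) * ∏ i ∈ Iᶜ, (1 - p i) by ring,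
      ← Finset.prod_mul_distrib]
    congr 1
    refine Finset.prod_congr rfl fun i _ => ?_
    have hne : (1 - p i) ≠ 0 := ne_of_gt (hp1 i)
    simp only [hwdef]
    rw [mul_comm, div_mul_cancel₀ _ hne]
  have hPBnn : ∀ I : Finset (Fin N), 0 ≤ PB p I := fun I => by
    rw [hPB]
    exact mul_nonneg hc.le (Finset.prod_nonneg fun i _ => (hw i).le)
  -- denominator
  have hfilter : (univ.filter (fun I : Finset (Fin N) => I.card = S)) =
      Finset.powersetCard S (univ : Finset (Fin N)) := by
    rw [Finset.powersetCard_eq_filter, Finset.powerset_univ]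
  have hden : (∑ I ∈ univ.filter (fun I : Finset (Fin N) => I.card = S), PB p I)
      = c * E w univ S := by
    rw [hfilter, E, Finset.mul_sum]
    exact Finset.sum_congr rfl fun I _ => hPB I
  have hEuniv : 0 < E w univ S :=
    E_pos hw (by simpa [Finset.card_univ] using hS)
  have hD : 0 < (∑ I ∈ univ.filter (fun I : Finset (Fin N) => I.card = S), PB p I) := by
    rw [hden]; exact mul_pos hc hEuniv
  -- numerator formula
  have hnum : ∀ K : Finset (Fin N), K.card ≤ S →
      (∑ I ∈ univ.filter (fun I => I.card = S ∧ K ⊆ I), PB p I)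
        = c * ((∏ i ∈ K, w i) * E w Kᶜ (S - K.card)) := by
    intro K hK
    have : (∑ I ∈ univ.filter (fun I => I.card = S ∧ K ⊆ I), ∏ i ∈ I, w i)
        = (∏ i ∈ K, w i) * E w Kᶜ (S - K.card) := by
      rw [E, Finset.mul_sum]
      refine Finset.sum_nbij' (fun I => I \ K) (fun J => K ∪ J) ?_ ?_ ?_ ?_ ?_
      · intro I hI
        simp only [Finset.mem_filter, Finset.mem_univ, true_and] at hI
        refine Finset.mem_powersetCard.2 ⟨?_, ?_⟩
        · intro x hx
          simp only [Finset.mem_sdiff] at hx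
          exact Finset.mem_compl.2 hx.2
        · rw [Finset.card_sdiff_of_subset hI.2, hI.1]
      · intro J hJ
        obtain ⟨hJsub, hJcard⟩ := Finset.mem_powersetCard.1 hJ
        have hdisj : Disjoint K J := by
          rw [Finset.disjoint_left]
          intro x hxK hxJ
          exact (Finset.mem_compl.1 (hJsub hxJ)) hxK
        simp only [Finset.mem_filter, Finset.mem_univ, true_and]
        constructor
        · rw [Finset.card_union_of_disjoint hdisj, hJcard]
          omega
        · exact Finset.subset_union_left
      · intro I hI
        simp only [Finset.mem_filter, Finset.mem_univ, true_and] at hI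
        exact Finset.union_sdiff_of_subset hI.2
      · intro J hJ
        obtain ⟨hJsub, _⟩ := Finset.mem_powersetCard.1 hJ
        have hdisj : Disjoint K J := by
          rw [Finset.disjoint_left]
          intro x hxK hxJ
          exact (Finset.mem_compl.1 (hJsub hxJ)) hxK
        exact Finset.union_sdiff_cancel_left hdisj
      · intro I hI
        simp only [Finset.mem_filter, Finset.mem_univ, true_and] at hI
        rw [← Finset.prod_sdiff hI.2, mul_comm]
    calc ∑ I ∈ univ.filter (fun I => I.card = S ∧ K ⊆ I), PB p I
        = ∑ I ∈ univ.filter (fun I => I.card = S ∧ K ⊆ I), c * ∏ i ∈ I, w i :=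
          Finset.sum_congr rfl fun I _ => hPB I
      _ = c * ∑ I ∈ univ.filter (fun I => I.card = S ∧ K ⊆ I), ∏ i ∈ I, w i := by
          rw [Finset.mul_sum]
      _ = c * ((∏ i ∈ K, w i) * E w Kᶜ (S - K.card)) := by rw [this]
  by_cases hcard : L.card + M.card ≤ S
  · -- main case
    have hLS : L.card ≤ S := by omega
    have hMS : M.card ≤ S := by omega
    have hLMcard : (L ∪ M).card = L.card + M.card := Finset.card_union_of_disjoint hLM
    have hLMS : (L ∪ M).card ≤ S := by omega
    have hkey := key_ineq hw hLM hcard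
    have hprodL : 0 < ∏ i ∈ L, w i := Finset.prod_pos fun i _ => hw i
    have hprodM : 0 < ∏ i ∈ M, w i := Finset.prod_pos fun i _ => hw i
    rw [incl, incl, incl, hnum _ hLMS, hnum _ hLS, hnum _ hMS, hden]
    rw [div_mul_div_comm]
    rw [div_le_div_iff₀ (mul_pos hc hEuniv) (by positivity)]
    have hsplit : (∏ i ∈ L ∪ M, w i) = (∏ i ∈ L, w i) * ∏ i ∈ M, w i :=
      Finset.prod_union hLM
    have hsub : S - (L ∪ M).card = S - L.card - M.card := by omega
    rw [hsplit, hsub]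
    have hmul := mul_le_mul_of_nonneg_left hkey
      (show (0:ℝ) ≤ c * c * c * ((∏ i ∈ L, w i) * ∏ i ∈ M, w i) * E w univ S by positivity)
    nlinarith [hmul]
  · -- degenerate case : numerator of L ∪ M is zero
    have hempty : (univ.filter (fun I : Finset (Fin N) => I.card = S ∧ L ∪ M ⊆ I)) = ∅ := by
      rw [Finset.filter_eq_empty_iff]
      rintro I -
      rintro ⟨hcardI, hsub⟩
      have := Finset.card_le_card hsub
      rw [Finset.card_union_of_disjoint hLM] at this
      omega
    have h0 : incl p S (L ∪ M) = 0 := by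
      rw [incl, hempty, Finset.sum_empty, zero_div]
    rw [h0]
    have hnn : ∀ K : Finset (Fin N), 0 ≤ incl p S K := by
      intro K
      exact div_nonneg (Finset.sum_nonneg fun I _ => hPBnn I) hD.le
    exact mul_nonneg (hnn L) (hnn M)
end

section
/- For rejective sampling with weights p_i ∈ (0,1) and two distinct indices i ≠ j, the second order inclusion probability satisfies the exact recursion π_{i,j}(S) = π_i(S) · (π_j(S−1) − π_{i,j}(S−1)) / (1 − π_i(S−1)). -/
open Finset

lemma PB_pos {N : ℕ} {p : Fin N → ℝ} (hp : ∀ k, p k ∈ Set.Ioo (0 : ℝ) 1)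
    (I : Finset (Fin N)) : 0 < PB p I := by
  unfold PB
  apply mul_pos
  · exact Finset.prod_pos (fun k _ => (hp k).1)
  · exact Finset.prod_pos (fun k _ => by have := (hp k).2; linarith)

lemma PB_erase {N : ℕ} {p : Fin N → ℝ} (hp : ∀ k, p k ∈ Set.Ioo (0 : ℝ) 1)
    {i : Fin N} {I : Finset (Fin N)} (hi : i ∈ I) :
    PB p I = (p i / (1 - p i)) * PB p (I.erase i) := by
  have h1 : (1 : ℝ) - p i ≠ 0 := by have := (hp i).2; linarith
  unfold PB
  rw [Finset.compl_erase, Finset.prod_insert (by simp [hi]),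
    ← Finset.mul_prod_erase I p hi]
  field_simp

lemma sum_split {N : ℕ} (p : Fin N → ℝ) (hp : ∀ k, p k ∈ Set.Ioo (0 : ℝ) 1)
    (i : Fin N) (n : ℕ) (Pr : Finset (Fin N) → Prop) [DecidablePred Pr]
    (hPr : ∀ J, i ∉ J → (Pr (insert i J) ↔ Pr J)) :
    ∑ I ∈ univ.filter (fun I => I.card = n + 1 ∧ i ∈ I ∧ Pr I), PB p I
      = (p i / (1 - p i)) *
        ∑ J ∈ univ.filter (fun J => J.card = n ∧ i ∉ J ∧ Pr J), PB p J := by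
  rw [Finset.mul_sum]
  refine Finset.sum_bij' (fun I _ => I.erase i) (fun J _ => insert i J) ?hi ?hj ?li ?ri ?h
  case hi =>
    intro I hI
    simp only [mem_filter, mem_univ, true_and] at hI ⊢
    refine ⟨?_, Finset.notMem_erase _ _, ?_⟩
    · rw [Finset.card_erase_of_mem hI.2.1, hI.1]
      omega
    · exact (hPr _ (Finset.notMem_erase _ _)).mp
        (by rw [Finset.insert_erase hI.2.1]; exact hI.2.2)
  case hj =>
    intro J hJ
    simp only [mem_filter, mem_univ, true_and] at hJ ⊢
    refine ⟨?_, Finset.mem_insert_self _ _, (hPr _ hJ.2.1).mpr hJ.2.2⟩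
    rw [Finset.card_insert_of_notMem hJ.2.1, hJ.1]
  case li =>
    intro I hI
    simp only [mem_filter, mem_univ, true_and] at hI
    exact Finset.insert_erase hI.2.1
  case ri =>
    intro J hJ
    simp only [mem_filter, mem_univ, true_and] at hJ
    exact Finset.erase_insert hJ.2.1
  case h =>
    intro I hI
    simp only [mem_filter, mem_univ, true_and] at hI
    exact PB_erase hp hI.2.1

theorem second_order_inclusion_recursion {N S : ℕ} (p : Fin N → ℝ)
    (hp : ∀ i, p i ∈ Set.Ioo (0 : ℝ) 1) (hS : 2 ≤ S) (hSN : S ≤ N)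
    (i j : Fin N) (hij : i ≠ j) :
    incl p S {i, j} =
      incl p S {i} * (incl p (S - 1) {j} - incl p (S - 1) {i, j}) /
        (1 - incl p (S - 1) {i}) := by
  obtain ⟨n, rfl⟩ : ∃ n, S = n + 1 := ⟨S - 1, by omega⟩
  have hnN : n ≤ N - 1 := by omega
  simp only [Nat.add_sub_cancel]
  unfold incl
  simp only [Finset.insert_subset_iff, Finset.singleton_subset_iff]
  set c := p i / (1 - p i) with hc
  set X := ∑ J ∈ univ.filter (fun J => J.card = n ∧ i ∉ J ∧ j ∈ J), PB p J with hX
  set Y := ∑ J ∈ univ.filter (fun J => J.card = n ∧ ¬ i ∈ J), PB p J with hY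
  set DS := ∑ I ∈ univ.filter (fun I => I.card = n + 1), PB p I with hDS
  set Dn := ∑ I ∈ univ.filter (fun I => I.card = n), PB p I with hDn
  set Xin := ∑ I ∈ univ.filter (fun I => I.card = n ∧ i ∈ I ∧ j ∈ I), PB p I with hXin
  set Yin := ∑ I ∈ univ.filter (fun I => I.card = n ∧ i ∈ I), PB p I with hYin
  -- numerators
  have N2 : ∑ I ∈ univ.filter (fun I => I.card = n + 1 ∧ i ∈ I ∧ j ∈ I), PB p I = c * X := by
    rw [hX, hc]
    exact sum_split p hp i n (fun J => j ∈ J)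
      (fun J hJ => by simp [Finset.mem_insert, hij.symm])
  have N1 : ∑ I ∈ univ.filter (fun I => I.card = n + 1 ∧ i ∈ I), PB p I = c * Y := by
    rw [hY, hc]
    have := sum_split p hp i n (fun _ => True) (fun J hJ => Iff.rfl)
    simpa using this
  -- denominator decompositions
  have h2 : Dn = Yin + Y := by
    rw [hDn, hYin, hY,
      ← Finset.sum_filter_add_sum_filter_not (univ.filter (fun I : Finset (Fin N) => I.card = n))
        (fun I => i ∈ I) (PB p), Finset.filter_filter, Finset.filter_filter]
  have h1 : ∑ I ∈ univ.filter (fun I => I.card = n ∧ j ∈ I), PB p I = Xin + X := by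
    rw [hXin, hX,
      ← Finset.sum_filter_add_sum_filter_not
        (univ.filter (fun I : Finset (Fin N) => I.card = n ∧ j ∈ I))
        (fun I => i ∈ I) (PB p), Finset.filter_filter, Finset.filter_filter]
    congr 1
    · exact Finset.sum_congr (Finset.filter_congr (fun I _ => by tauto)) (fun _ _ => rfl)
    · exact Finset.sum_congr (Finset.filter_congr (fun I _ => by tauto)) (fun _ _ => rfl)
  -- positivity
  have hDSpos : 0 < DS := by
    rw [hDS]
    apply Finset.sum_pos (fun I _ => PB_pos hp I)
    obtain ⟨t, _, ht⟩ := Finset.exists_subset_card_eq (s := (univ : Finset (Fin N)))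
      (n := n + 1) (by simpa using hSN)
    exact ⟨t, by simp [ht]⟩
  have hYpos : 0 < Y := by
    rw [hY]
    apply Finset.sum_pos (fun I _ => PB_pos hp I)
    obtain ⟨t, hts, ht⟩ := Finset.exists_subset_card_eq (s := univ.erase i) (n := n)
      (by rw [Finset.card_erase_of_mem (Finset.mem_univ i)]; simpa using hnN)
    have hit : i ∉ t := fun h => Finset.notMem_erase i univ (hts h)
    exact ⟨t, by simp [ht, hit]⟩
  have hDnpos : 0 < Dn := by
    rw [h2]
    have : 0 ≤ Yin := Finset.sum_nonneg (fun I _ => (PB_pos hp I).le)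
    linarith
  -- finish
  have hYin2 : Yin = Dn - Y := by linarith [h2]
  rw [N2, N1, h1, hYin2]
  field_simp
  rw [show Xin + X - Xin = X by ring, show Dn - (Dn - Y) = Y by ring, mul_right_comm,
    mul_div_cancel_right₀ _ hYpos.ne']
end

section
/- If A is a positive semi-definite N×N matrix and B is any N×N matrix, then the operator norm of the Hadamard (entrywise) product satisfies ‖A ⊙ B‖ ≤ (max_i A_{ii}) · ‖B‖. -/
open scoped Matrix Matrix.Norms.L2Operator

lemma dot_abs_le' {N : ℕ} (u w : EuclideanSpace ℝ (Fin N)) :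
    |∑ i, u i * w i| ≤ ‖u‖ * ‖w‖ := by
  have := abs_real_inner_le_norm w u
  rw [mul_comm ‖u‖]
  simpa [PiLp.inner_apply, RCLike.inner_apply, conj_trivial] using this

lemma eucl_norm_eq' {N : ℕ} (u : EuclideanSpace ℝ (Fin N)) :
    ‖u‖ = Real.sqrt (∑ i, u i ^ 2) := by
  rw [EuclideanSpace.norm_eq]; simp [sq_abs]

lemma hadamard_bilinear_bound {N : ℕ} (A B : Matrix (Fin N) (Fin N) ℝ)
    (hA : A.PosSemidef) (c : ℝ) (hc : 0 ≤ c) (hd : ∀ i, A i i ≤ c)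
    (x y : EuclideanSpace ℝ (Fin N)) :
    |∑ i, ∑ j, x i * ((A ⊙ B) i j) * y j| ≤ c * ‖B‖ * (‖x‖ * ‖y‖) := by
  obtain ⟨C, hCA⟩ : ∃ C : Matrix (Fin N) (Fin N) ℝ, A = star C * C := by
    open scoped MatrixOrder in exact CStarAlgebra.nonneg_iff_eq_star_mul_self.mp hA.nonneg
  have hC : ∀ i j, A i j = ∑ k, C k i * C k j := by
    intro i j
    rw [hCA, Matrix.mul_apply]
    simp [Matrix.star_apply]
  set u : Fin N → EuclideanSpace ℝ (Fin N) := fun k => WithLp.toLp 2 (fun i => C k i * x i) with hu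
  set v : Fin N → EuclideanSpace ℝ (Fin N) := fun k => WithLp.toLp 2 (fun j => C k j * y j) with hv
  have step1 : ∑ i, ∑ j, x i * ((A ⊙ B) i j) * y j
      = ∑ k, ∑ i, u k i * ((EuclideanSpace.equiv (Fin N) ℝ).symm (B *ᵥ v k) : EuclideanSpace ℝ (Fin N)) i := by
    have : ∑ i, ∑ j, x i * ((A ⊙ B) i j) * y j
        = ∑ i, ∑ k, ∑ j, (C k i * x i) * B i j * (C k j * y j) := by
      refine Finset.sum_congr rfl fun i _ => ?_
      rw [Finset.sum_comm]
      refine Finset.sum_congr rfl fun j _ => ?_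
      rw [Matrix.hadamard_apply, hC i j]
      simp only [Finset.sum_mul, Finset.mul_sum]
      refine Finset.sum_congr rfl fun k _ => by ring
    rw [this, Finset.sum_comm]
    refine Finset.sum_congr rfl fun k _ => Finset.sum_congr rfl fun i _ => ?_
    have hrfl : ((EuclideanSpace.equiv (Fin N) ℝ).symm (B *ᵥ v k) : EuclideanSpace ℝ (Fin N)) i
        = ∑ j, B i j * v k j := rfl
    rw [hrfl, Finset.mul_sum]
    refine Finset.sum_congr rfl fun j _ => by simp only [hu, hv]; ring
  rw [step1]
  have step2 : |∑ k, ∑ i, u k i * ((EuclideanSpace.equiv (Fin N) ℝ).symm (B *ᵥ v k) : EuclideanSpace ℝ (Fin N)) i|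
      ≤ ∑ k, ‖u k‖ * (‖B‖ * ‖v k‖) := by
    refine (Finset.abs_sum_le_sum_abs _ _).trans (Finset.sum_le_sum fun k _ => ?_)
    refine (dot_abs_le' _ _).trans ?_
    exact mul_le_mul_of_nonneg_left (Matrix.l2_opNorm_mulVec B (v k)) (norm_nonneg _)
  refine step2.trans ?_
  have step3 : ∑ k, ‖u k‖ * (‖B‖ * ‖v k‖) = ‖B‖ * ∑ k, ‖u k‖ * ‖v k‖ := by
    rw [Finset.mul_sum]; exact Finset.sum_congr rfl fun k _ => by ring
  rw [step3]
  have cs : ∑ k, ‖u k‖ * ‖v k‖ ≤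
      Real.sqrt (∑ k, ∑ i, (u k i) ^ 2) * Real.sqrt (∑ k, ∑ j, (v k j) ^ 2) := by
    have := Real.sum_sqrt_mul_sqrt_le (Finset.univ (α := Fin N))
      (f := fun k => ∑ i, (u k i) ^ 2) (g := fun k => ∑ j, (v k j) ^ 2)
      (fun k => Finset.sum_nonneg fun i _ => sq_nonneg _)
      (fun k => Finset.sum_nonneg fun j _ => sq_nonneg _)
    simpa only [← eucl_norm_eq'] using this
  have diagsum : ∀ (z : EuclideanSpace ℝ (Fin N)),
      ∑ k, ∑ i, (C k i * z i) ^ 2 ≤ c * ‖z‖ ^ 2 := by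
    intro z
    rw [Finset.sum_comm]
    have : ∀ i, ∑ k, (C k i * z i) ^ 2 = A i i * z i ^ 2 := by
      intro i
      rw [hC i i, Finset.sum_mul]
      exact Finset.sum_congr rfl fun k _ => by ring
    calc ∑ i, ∑ k, (C k i * z i) ^ 2 = ∑ i, A i i * z i ^ 2 := by
          exact Finset.sum_congr rfl fun i _ => this i
      _ ≤ ∑ i, c * z i ^ 2 := Finset.sum_le_sum fun i _ =>
          mul_le_mul_of_nonneg_right (hd i) (sq_nonneg _)
      _ = c * ‖z‖ ^ 2 := by
          rw [eucl_norm_eq' z, Real.sq_sqrt (Finset.sum_nonneg fun i _ => sq_nonneg _),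
            Finset.mul_sum]
  have hx := diagsum x
  have hy := diagsum y
  have sqx : Real.sqrt (∑ k, ∑ i, (u k i) ^ 2) ≤ Real.sqrt c * ‖x‖ := by
    refine (Real.sqrt_le_sqrt hx).trans ?_
    rw [Real.sqrt_mul hc, Real.sqrt_sq (norm_nonneg _)]
  have sqy : Real.sqrt (∑ k, ∑ j, (v k j) ^ 2) ≤ Real.sqrt c * ‖y‖ := by
    refine (Real.sqrt_le_sqrt hy).trans ?_
    rw [Real.sqrt_mul hc, Real.sqrt_sq (norm_nonneg _)]
  have final : ∑ k, ‖u k‖ * ‖v k‖ ≤ c * (‖x‖ * ‖y‖) := by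
    refine cs.trans ?_
    calc Real.sqrt (∑ k, ∑ i, (u k i) ^ 2) * Real.sqrt (∑ k, ∑ j, (v k j) ^ 2)
        ≤ (Real.sqrt c * ‖x‖) * (Real.sqrt c * ‖y‖) := by
          exact mul_le_mul sqx sqy (Real.sqrt_nonneg _)
            (by positivity)
      _ = c * (‖x‖ * ‖y‖) := by
          rw [show (Real.sqrt c * ‖x‖) * (Real.sqrt c * ‖y‖)
              = (Real.sqrt c * Real.sqrt c) * (‖x‖ * ‖y‖) by ring,
            Real.mul_self_sqrt hc]
  calc ‖B‖ * ∑ k, ‖u k‖ * ‖v k‖ ≤ ‖B‖ * (c * (‖x‖ * ‖y‖)) :=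
        mul_le_mul_of_nonneg_left final (norm_nonneg _)
    _ = c * ‖B‖ * (‖x‖ * ‖y‖) := by ring

theorem hadamard_opNorm_le {N : ℕ} (A B : Matrix (Fin N) (Fin N) ℝ)
    (hA : A.PosSemidef) :
    ‖A ⊙ B‖ ≤ (⨆ i, A i i) * ‖B‖ := by
  rcases Nat.eq_zero_or_pos N with h0 | hN
  · subst h0
    have : (A ⊙ B) = 0 := Subsingleton.elim _ _
    rw [this, norm_zero]
    rw [show (⨆ i : Fin 0, A i i) = 0 by rw [iSup, Set.range_eq_empty, Real.sSup_empty]]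
    simp
  · set c := ⨆ i, A i i with hc
    have hd : ∀ i, A i i ≤ c := fun i =>
      le_ciSup (f := fun i => A i i) (Set.Finite.bddAbove (Set.finite_range _)) i
    have hnn : 0 ≤ c := by
      obtain ⟨i⟩ := Fin.pos_iff_nonempty.mp hN
      have h1 : (0:ℝ) ≤ A i i := hA.diag_nonneg
      exact h1.trans (hd i)
    rw [Matrix.l2_opNorm_def]
    refine ContinuousLinearMap.opNorm_le_bound _ (by positivity) fun y => ?_
    set M := A ⊙ B with hM
    set w : EuclideanSpace ℝ (Fin N) :=
      (EuclideanSpace.equiv (Fin N) ℝ).symm (M *ᵥ (WithLp.equiv 2 _ y)) with hw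
    have happ : ((Matrix.toEuclideanLin.trans LinearMap.toContinuousLinearMap) M) y = w := rfl
    rw [happ]
    have key := hadamard_bilinear_bound A B hA c hnn hd w y
    have hsq : ‖w‖ ^ 2 = ∑ i, ∑ j, w i * (M i j) * y j := by
      rw [eucl_norm_eq' w, Real.sq_sqrt (Finset.sum_nonneg fun i _ => sq_nonneg _)]
      refine Finset.sum_congr rfl fun i _ => ?_
      have : w i = ∑ j, M i j * y j := by
        simp [hw, EuclideanSpace.equiv, Matrix.mulVec, dotProduct]
      rw [pow_two]
      conv_lhs => rw [this]
      rw [Finset.mul_sum]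
      exact Finset.sum_congr rfl fun j _ => by
        conv_rhs => rw [this]
        ring
    have hb : ‖w‖ ^ 2 ≤ c * ‖B‖ * (‖w‖ * ‖y‖) := by
      rw [hsq]
      exact (le_abs_self _).trans key
    rcases eq_or_lt_of_le (norm_nonneg w) with hz | hz
    · rw [← hz]; positivity
    · have := hb
      rw [pow_two] at this
      have h2 : ‖w‖ * ‖w‖ ≤ (c * ‖B‖ * ‖y‖) * ‖w‖ := by nlinarith
      exact le_of_mul_le_mul_right (by nlinarith) hz
end

section
/- Fix disjoint sets A, B ⊆ [N] with |A| = S − T and |B| = 2T for some 1 ≤ T ≤ S, and let 𝒬 be the set of ordered pairs (I, J) of S-element subsets of [N] with I∩J = A and I△J = B. Then the matrix Σ_{(I,J)∈𝒬} (1_I 1_J^* − 1_I 1_I^* + 2 diag(1_I)) is positive semi-definite, where 1_I ∈ ℝ^N is the indicator vector of I. -/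
open Finset
open scoped symmDiff

/-- The 0/1 indicator vector of a finite set of indices. -/
def indVec {N : ℕ} (I : Finset (Fin N)) : Fin N → ℝ := fun i => if i ∈ I then 1 else 0

lemma indVec_nonneg {N : ℕ} (I : Finset (Fin N)) (i : Fin N) : 0 ≤ indVec I i := by
  unfold indVec; split <;> norm_num

/- ### Nat.choose inequalities -/

lemma aux_choose_half_succ (t : ℕ) : (2*t+1).choose t ≤ 2 * (2*t).choose t := by
  cases t with
  | zero => simp
  | succ s =>
    have h1 : (2*(s+1)+1).choose (s+1) = (2*(s+1)).choose s + (2*(s+1)).choose (s+1) :=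
      Nat.choose_succ_succ (2*(s+1)) s
    have h2 : (2*(s+1)).choose s ≤ (2*(s+1)).choose (s+1) := by
      have := Nat.choose_le_middle s (2*(s+1))
      simpa [Nat.mul_div_cancel_left] using this
    omega

lemma aux_choose_symm_succ (t : ℕ) : (2*t+1).choose (t+1) = (2*t+1).choose t := by
  have := Nat.choose_symm (n := 2*t+1) (k := t) (by omega)
  have h : 2*t+1 - t = t+1 := by omega
  rw [h] at this
  exact this

lemma aux_K_le_4E {T : ℕ} (hT : 1 ≤ T) :
    (2*T).choose T ≤ 4 * (2*(T-1)).choose (T-1) := by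
  obtain ⟨t, rfl⟩ : ∃ t, T = t + 1 := ⟨T - 1, by omega⟩
  simp only [Nat.add_sub_cancel]
  have h1 : (2*(t+1)).choose (t+1) = (2*t+1).choose t + (2*t+1).choose (t+1) := by
    have h : 2*(t+1) = (2*t+1)+1 := by ring
    rw [h]
    exact Nat.choose_succ_succ (2*t+1) t
  rw [h1, aux_choose_symm_succ]
  have := aux_choose_half_succ t
  omega

lemma aux_2E_le_K {T : ℕ} (hT : 1 ≤ T) :
    2 * (2*(T-1)).choose (T-1) ≤ (2*T).choose T := by
  obtain ⟨t, rfl⟩ : ∃ t, T = t + 1 := ⟨T - 1, by omega⟩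
  simp only [Nat.add_sub_cancel]
  have h1 : (2*(t+1)).choose (t+1) = (2*t+1).choose t + (2*t+1).choose (t+1) := by
    have h : 2*(t+1) = (2*t+1)+1 := by ring
    rw [h]
    exact Nat.choose_succ_succ (2*t+1) t
  have h2 : (2*t).choose t ≤ (2*t+1).choose t := Nat.choose_le_choose t (by omega)
  rw [h1, aux_choose_symm_succ]
  omega

/- ### Counting lemmas -/

lemma two_mul_count_mem {α : Type*} [DecidableEq α] {B : Finset α} {T : ℕ}
    (hB : B.card = 2*T) {i : α} (hi : i ∈ B) :
    2 * ((B.powersetCard T).filter (fun C => i ∈ C)).card = (B.powersetCard T).card := by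
  classical
  have key : ((B.powersetCard T).filter (fun C => i ∈ C)).card
      = ((B.powersetCard T).filter (fun C => ¬ i ∈ C)).card := by
    apply Finset.card_nbij' (i := fun C => B \ C) (j := fun C => B \ C)
    · intro C hC
      simp only [Finset.mem_coe, Finset.mem_filter, Finset.mem_powersetCard] at hC ⊢
      obtain ⟨⟨hsub, hcard⟩, hiC⟩ := hC
      refine ⟨⟨Finset.sdiff_subset, ?_⟩, by simp [hiC]⟩
      rw [Finset.card_sdiff_of_subset hsub, hB, hcard]; omega
    · intro C hC
      simp only [Finset.mem_coe, Finset.mem_filter, Finset.mem_powersetCard] at hC ⊢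
      obtain ⟨⟨hsub, hcard⟩, hiC⟩ := hC
      refine ⟨⟨Finset.sdiff_subset, ?_⟩, by simp [hi, hiC]⟩
      rw [Finset.card_sdiff_of_subset hsub, hB, hcard]; omega
    · intro C hC
      simp only [Finset.mem_coe, Finset.mem_filter, Finset.mem_powersetCard] at hC
      exact Finset.sdiff_sdiff_eq_self hC.1.1
    · intro C hC
      simp only [Finset.mem_coe, Finset.mem_filter, Finset.mem_powersetCard] at hC
      exact Finset.sdiff_sdiff_eq_self hC.1.1
  have hpart := Finset.card_filter_add_card_filter_not
    (s := B.powersetCard T) (p := fun C => i ∈ C)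
  omega

lemma count_mem_notMem {α : Type*} [DecidableEq α] {B : Finset α} {T : ℕ}
    (hT : 1 ≤ T) (hB : B.card = 2*T) {i j : α} (hi : i ∈ B) (hj : j ∈ B) (hij : i ≠ j) :
    ((B.powersetCard T).filter (fun C => i ∈ C ∧ j ∉ C)).card = (2*(T-1)).choose (T-1) := by
  classical
  have hBij : ((B.erase i).erase j).card = 2*(T-1) := by
    rw [Finset.card_erase_of_mem (Finset.mem_erase.mpr ⟨hij.symm, hj⟩),
      Finset.card_erase_of_mem hi, hB]
    omega
  have key : ((B.powersetCard T).filter (fun C => i ∈ C ∧ j ∉ C)).card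
      = (((B.erase i).erase j).powersetCard (T-1)).card := by
    apply Finset.card_nbij' (i := fun C => C.erase i) (j := fun D => insert i D)
    · intro C hC
      simp only [Finset.mem_coe, Finset.mem_filter, Finset.mem_powersetCard] at hC ⊢
      obtain ⟨⟨hsub, hcard⟩, hiC, hjC⟩ := hC
      constructor
      · intro x hx
        simp only [Finset.mem_erase] at hx ⊢
        exact ⟨fun h => hjC (h ▸ hx.2), hx.1, hsub hx.2⟩
      · rw [Finset.card_erase_of_mem hiC, hcard]
    · intro D hD
      simp only [Finset.mem_coe, Finset.mem_filter, Finset.mem_powersetCard] at hD ⊢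
      obtain ⟨hsub, hcard⟩ := hD
      have hiD : i ∉ D := fun h => by
        have := hsub h
        simp [Finset.mem_erase] at this
      have hjD : j ∉ D := fun h => by
        have := hsub h
        simp [Finset.mem_erase] at this
      refine ⟨⟨?_, ?_⟩, Finset.mem_insert_self _ _, ?_⟩
      · intro x hx
        rcases Finset.mem_insert.mp hx with rfl | hx
        · exact hi
        · have := hsub hx
          simp only [Finset.mem_erase] at this
          exact this.2.2
      · rw [Finset.card_insert_of_notMem hiD, hcard]; omega
      · intro h
        rcases Finset.mem_insert.mp h with h | h
        · exact hij h.symm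
        · exact hjD h
    · intro C hC
      simp only [Finset.mem_coe, Finset.mem_filter, Finset.mem_powersetCard] at hC
      exact Finset.insert_erase hC.2.1
    · intro D hD
      simp only [Finset.mem_coe, Finset.mem_powersetCard] at hD
      apply Finset.erase_insert
      intro h
      have := hD.1 h
      simp [Finset.mem_erase] at this
  rw [key, Finset.card_powersetCard, hBij]

/- ### Sum evaluation helpers -/

lemma sum_ite_card {β : Type*} (s : Finset β) (p : β → Prop) [DecidablePred p] (a b : ℝ) :
    ∑ c ∈ s, (if p c then a else b)
      = (s.filter p).card * a + (s.filter (fun c => ¬ p c)).card * b := by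
  rw [Finset.sum_ite, Finset.sum_const, Finset.sum_const, nsmul_eq_mul, nsmul_eq_mul]

lemma sum_ite_ite_card {β : Type*} (s : Finset β) (p q : β → Prop)
    [DecidablePred p] [DecidablePred q] (a b : ℝ) :
    ∑ c ∈ s, (if p c then (if q c then a else b) else 0)
      = (s.filter (fun c => p c ∧ q c)).card * a
        + (s.filter (fun c => p c ∧ ¬ q c)).card * b := by
  rw [Finset.sum_ite, Finset.sum_const_zero, add_zero, sum_ite_card,
    Finset.filter_filter, Finset.filter_filter]

/- ### Reindexing the sum over pairs -/

lemma sum_Q {N S T : ℕ} (hTS : T ≤ S)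
    (A B : Finset (Fin N)) (hAB : Disjoint A B)
    (hA : A.card = S - T) (hB : B.card = 2 * T)
    {M : Type*} [AddCommMonoid M] (F : Finset (Fin N) × Finset (Fin N) → M) :
    (∑ q ∈ (univ ×ˢ univ).filter
        (fun q : Finset (Fin N) × Finset (Fin N) =>
          q.1.card = S ∧ q.2.card = S ∧ q.1 ∩ q.2 = A ∧ q.1 ∆ q.2 = B), F q)
      = ∑ C ∈ B.powersetCard T, F (A ∪ C, A ∪ (B \ C)) := by
  classical
  have hST : S - T + T = S := by omega
  refine Finset.sum_nbij' (i := fun q => q.1 \ A) (j := fun C => (A ∪ C, A ∪ (B \ C)))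
    ?_ ?_ ?_ ?_ ?_
  · -- forward membership
    intro q hq
    simp only [Finset.mem_filter] at hq
    obtain ⟨-, hq1, hq2, hI, hD⟩ := hq
    have hAsub : A ⊆ q.1 := hI ▸ Finset.inter_subset_left
    simp only [Finset.mem_powersetCard]
    constructor
    · intro a ha
      simp only [Finset.mem_sdiff] at ha
      have haq2 : a ∉ q.2 := fun h => ha.2 (hI ▸ Finset.mem_inter.mpr ⟨ha.1, h⟩)
      rw [← hD]
      exact Finset.mem_symmDiff.mpr (Or.inl ⟨ha.1, haq2⟩)
    · rw [Finset.card_sdiff_of_subset hAsub, hq1, hA]; omega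
  · -- backward membership
    intro C hC
    simp only [Finset.mem_powersetCard] at hC
    obtain ⟨hCB, hCcard⟩ := hC
    have hAC : Disjoint A C := hAB.mono_right hCB
    have hABC : Disjoint A (B \ C) := hAB.mono_right Finset.sdiff_subset
    have hAnB : ∀ a, a ∈ A → a ∉ B := fun a ha => Finset.disjoint_left.mp hAB ha
    simp only [Finset.mem_filter, Finset.mem_product, Finset.mem_univ, true_and]
    refine ⟨?_, ?_, ?_, ?_⟩
    · rw [Finset.card_union_of_disjoint hAC, hA, hCcard]; omega
    · rw [Finset.card_union_of_disjoint hABC, hA, Finset.card_sdiff_of_subset hCB, hB, hCcard]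
      omega
    · ext a
      have h1 := hAnB a
      have h2 : a ∈ C → a ∈ B := fun h => hCB h
      simp only [Finset.mem_inter, Finset.mem_union, Finset.mem_sdiff]
      tauto
    · ext a
      have h1 := hAnB a
      have h2 : a ∈ C → a ∈ B := fun h => hCB h
      simp only [Finset.mem_symmDiff, Finset.mem_union, Finset.mem_sdiff]
      tauto
  · -- left inverse
    intro q hq
    simp only [Finset.mem_filter] at hq
    obtain ⟨-, hq1, hq2, hI, hD⟩ := hq
    have hAsub : A ⊆ q.1 := hI ▸ Finset.inter_subset_left
    have h1 : A ∪ q.1 \ A = q.1 := Finset.union_sdiff_of_subset hAsub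
    have h2 : A ∪ B \ (q.1 \ A) = q.2 := by
      ext a
      have hIa : a ∈ A ↔ a ∈ q.1 ∧ a ∈ q.2 := by rw [← hI]; simp
      have hDa : a ∈ B ↔ (a ∈ q.1 ∧ a ∉ q.2) ∨ (a ∈ q.2 ∧ a ∉ q.1) := by
        rw [← hD]; exact Finset.mem_symmDiff
      simp only [Finset.mem_union, Finset.mem_sdiff]
      rw [hIa, hDa]
      tauto
    exact Prod.ext h1 h2
  · -- right inverse
    intro C hC
    simp only [Finset.mem_powersetCard] at hC
    have hAC : Disjoint A C := hAB.mono_right hC.1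
    exact Finset.union_sdiff_cancel_left hAC
  · intro q hq
    simp only [Finset.mem_filter] at hq
    obtain ⟨-, hq1, hq2, hI, hD⟩ := hq
    have hAsub : A ⊆ q.1 := hI ▸ Finset.inter_subset_left
    have h1 : A ∪ q.1 \ A = q.1 := Finset.union_sdiff_of_subset hAsub
    have h2 : A ∪ B \ (q.1 \ A) = q.2 := by
      ext a
      have hIa : a ∈ A ↔ a ∈ q.1 ∧ a ∈ q.2 := by rw [← hI]; simp
      have hDa : a ∈ B ↔ (a ∈ q.1 ∧ a ∉ q.2) ∨ (a ∈ q.2 ∧ a ∉ q.1) := by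
        rw [← hD]; exact Finset.mem_symmDiff
      simp only [Finset.mem_union, Finset.mem_sdiff]
      rw [hIa, hDa]
      tauto
    rw [show ((A ∪ q.1 \ A, A ∪ B \ (q.1 \ A)) : Finset (Fin N) × Finset (Fin N)) = q
      from Prod.ext h1 h2]

/- ### rank-one PSD -/

lemma posSemidef_smul_vecMulVec {n : ℕ} {c : ℝ} (hc : 0 ≤ c) (v : Fin n → ℝ) :
    (c • Matrix.vecMulVec v v).PosSemidef := by
  classical
  set w : Fin n → ℝ := fun i => Real.sqrt c * v i with hw
  have key : c • Matrix.vecMulVec v v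
      = (Matrix.of (fun i (_ : Unit) => w i)) * (Matrix.of (fun i (_ : Unit) => w i)).conjTranspose := by
    ext i j
    simp only [Matrix.smul_apply, Matrix.vecMulVec_apply, Matrix.mul_apply,
      Matrix.conjTranspose_apply, Matrix.of_apply, Finset.univ_unique, Finset.sum_singleton,
      star_trivial, smul_eq_mul, hw]
    have : Real.sqrt c * Real.sqrt c = c := Real.mul_self_sqrt hc
    linear_combination (-(v i * v j)) * this
  rw [key]
  exact Matrix.posSemidef_self_mul_conjTranspose _

theorem pair_sum_matrix_posSemidef {N S T : ℕ} (hT : 1 ≤ T) (hTS : T ≤ S) (hS : S ≤ N)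
    (A B : Finset (Fin N)) (hAB : Disjoint A B)
    (hA : A.card = S - T) (hB : B.card = 2 * T) :
    (∑ q ∈ (univ ×ˢ univ).filter
        (fun q : Finset (Fin N) × Finset (Fin N) =>
          q.1.card = S ∧ q.2.card = S ∧ q.1 ∩ q.2 = A ∧ q.1 ∆ q.2 = B),
      (Matrix.vecMulVec (indVec q.1) (indVec q.2) -
        Matrix.vecMulVec (indVec q.1) (indVec q.1) +
        (2 : ℝ) • Matrix.diagonal (indVec q.1))).PosSemidef := by
  classical
  have hEK : 2 * (((2*(T-1)).choose (T-1) : ℕ) : ℝ) ≤ (((2*T).choose T : ℕ) : ℝ) := by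
    exact_mod_cast aux_2E_le_K hT
  have hK4E : (((2*T).choose T : ℕ) : ℝ) ≤ 4 * (((2*(T-1)).choose (T-1) : ℕ) : ℝ) := by
    exact_mod_cast aux_K_le_4E hT
  have key : ∀ (Mx : Matrix (Fin N) (Fin N) ℝ),
      Mx = (2 * (((2*T).choose T : ℕ) : ℝ)) • Matrix.diagonal (indVec A)
        + ((((2*T).choose T : ℕ) : ℝ) - 2 * (((2*(T-1)).choose (T-1) : ℕ) : ℝ)) •
            Matrix.diagonal (indVec B)
        + (2 * (((2*(T-1)).choose (T-1) : ℕ) : ℝ) - (((2*T).choose T : ℕ) : ℝ)/2) •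
            Matrix.vecMulVec (indVec B) (indVec B)
      → Mx.PosSemidef := by
    intro Mx hMx
    rw [hMx]
    refine Matrix.PosSemidef.add (Matrix.PosSemidef.add ?_ ?_) ?_
    · rw [← Matrix.diagonal_smul]
      refine Matrix.PosSemidef.diagonal (Pi.le_def.mpr fun k => ?_)
      simp only [Pi.smul_apply, smul_eq_mul, Pi.zero_apply]
      have := indVec_nonneg A k
      positivity
    · rw [← Matrix.diagonal_smul]
      refine Matrix.PosSemidef.diagonal (Pi.le_def.mpr fun k => ?_)
      simp only [Pi.smul_apply, smul_eq_mul, Pi.zero_apply]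
      have h1 := indVec_nonneg B k
      have h2 : (0:ℝ) ≤ (((2*T).choose T : ℕ) : ℝ) - 2 * (((2*(T-1)).choose (T-1) : ℕ) : ℝ) := by
        linarith
      exact mul_nonneg h2 h1
    · exact posSemidef_smul_vecMulVec (by linarith) _
  apply key
  rw [sum_Q hTS A B hAB hA hB]
  ext i j
  simp only [Matrix.sum_apply, Matrix.add_apply, Matrix.sub_apply, Matrix.smul_apply,
    Matrix.vecMulVec_apply, Matrix.diagonal_apply, smul_eq_mul]
  by_cases hiA : i ∈ A
  · have hiB : i ∉ B := fun h => Finset.disjoint_left.mp hAB hiA h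
    by_cases hjA : j ∈ A
    · have hjB : j ∉ B := fun h => Finset.disjoint_left.mp hAB hjA h
      by_cases hij : i = j
      · subst hij
        trans (∑ C ∈ B.powersetCard T, (2:ℝ))
        · exact Finset.sum_congr rfl fun C _ => by simp [indVec, hiA]
        · rw [Finset.sum_const, nsmul_eq_mul, Finset.card_powersetCard, hB]
          simp [indVec, hiA, hiB]
          ring
      · trans (∑ C ∈ B.powersetCard T, (0:ℝ))
        · exact Finset.sum_congr rfl fun C _ => by simp [indVec, hiA, hjA, hij]
        · simp [indVec, hiA, hiB, hjA, hjB, hij]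
    · by_cases hjB : j ∈ B
      · -- i ∈ A, j ∈ B
        have hij : i ≠ j := fun h => hjA (h ▸ hiA)
        have hnj := two_mul_count_mem hB hjB
        have hpartj := Finset.card_filter_add_card_filter_not
          (s := B.powersetCard T) (p := fun C => j ∈ C)
        trans (∑ C ∈ B.powersetCard T, (if j ∈ C then (-1:ℝ) else 1))
        · refine Finset.sum_congr rfl fun C _ => ?_
          by_cases h2 : j ∈ C <;> simp [indVec, hiA, hjA, hjB, hij, h2]
        · rw [sum_ite_card]
          have h1 : ((B.powersetCard T).filter (fun C => j ∈ C)).card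
              = ((B.powersetCard T).filter (fun C => ¬ j ∈ C)).card := by omega
          rw [h1]
          simp [indVec, hiA, hiB, hjA, hjB, hij]
      · -- i ∈ A, j ∉ A ∪ B
        have hij : i ≠ j := fun h => hjA (h ▸ hiA)
        trans (∑ C ∈ B.powersetCard T, (0:ℝ))
        · refine Finset.sum_congr rfl fun C hC => ?_
          have hjC : j ∉ C := fun h => hjB ((Finset.mem_powersetCard.mp hC).1 h)
          simp [indVec, hiA, hjA, hjB, hjC, hij]
        · simp [indVec, hiA, hiB, hjA, hjB, hij]
  · by_cases hiB : i ∈ B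
    · by_cases hjA : j ∈ A
      · -- i ∈ B, j ∈ A
        have hij : i ≠ j := fun h => hiA (h ▸ hjA)
        have hjB : j ∉ B := fun h => Finset.disjoint_left.mp hAB hjA h
        trans (∑ C ∈ B.powersetCard T, (0:ℝ))
        · refine Finset.sum_congr rfl fun C _ => ?_
          by_cases h1 : i ∈ C <;> simp [indVec, hiA, hjA, hij, h1]
        · simp [indVec, hiA, hiB, hjA, hjB, hij]
      · by_cases hjB : j ∈ B
        · by_cases hij : i = j
          · subst hij
            have hni := two_mul_count_mem hB hiB
            rw [Finset.card_powersetCard, hB] at hni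
            trans (∑ C ∈ B.powersetCard T, (if i ∈ C then (1:ℝ) else 0))
            · refine Finset.sum_congr rfl fun C _ => ?_
              by_cases h1 : i ∈ C <;> simp [indVec, hiA, hiB, h1] <;> norm_num
            · rw [sum_ite_card]
              have c2 := congrArg (Nat.cast (R := ℝ)) hni
              push_cast at c2
              simp [indVec, hiA, hiB]
              linarith
          · -- i, j ∈ B, i ≠ j
            have hni := two_mul_count_mem hB hiB
            rw [Finset.card_powersetCard, hB] at hni
            have hE := count_mem_notMem hT hB hiB hjB hij
            have hsplit := Finset.card_filter_add_card_filter_not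
              (s := (B.powersetCard T).filter (fun C => i ∈ C)) (p := fun C => j ∈ C)
            rw [Finset.filter_filter, Finset.filter_filter] at hsplit
            trans (∑ C ∈ B.powersetCard T, (if i ∈ C then (if j ∈ C then (-1:ℝ) else 1) else 0))
            · refine Finset.sum_congr rfl fun C _ => ?_
              by_cases h1 : i ∈ C <;> by_cases h2 : j ∈ C <;>
                simp [indVec, hiA, hiB, hjA, hjB, hij, h1, h2] <;> norm_num
            · rw [sum_ite_ite_card]
              rw [hE] at hsplit
              have c1 := congrArg (Nat.cast (R := ℝ)) hsplit
              have c2 := congrArg (Nat.cast (R := ℝ)) hni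
              push_cast at c1 c2
              rw [hE]
              simp [indVec, hiA, hiB, hjA, hjB, hij]
              linarith
        · -- i ∈ B, j ∉ A ∪ B
          have hij : i ≠ j := fun h => hjB (h ▸ hiB)
          trans (∑ C ∈ B.powersetCard T, (0:ℝ))
          · refine Finset.sum_congr rfl fun C hC => ?_
            have hjC : j ∉ C := fun h => hjB ((Finset.mem_powersetCard.mp hC).1 h)
            by_cases h1 : i ∈ C <;> simp [indVec, hiA, hjA, hjB, hjC, hij, h1]
          · simp [indVec, hiA, hiB, hjA, hjB, hij]
    · -- i ∉ A ∪ B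
      trans (∑ C ∈ B.powersetCard T, (0:ℝ))
      · refine Finset.sum_congr rfl fun C hC => ?_
        have hiC : i ∉ C := fun h => hiB ((Finset.mem_powersetCard.mp hC).1 h)
        simp [indVec, hiA, hiB, hiC]
      · simp [indVec, hiA, hiB]
end

section
/- Fix disjoint sets A, B ⊆ [N] with |A| = S − T, |B| = 2T, and let 𝒬 = {(I,J) : |I| = |J| = S, I∩J = A, I△J = B}. For L ⊆ A∪B with L_B := L∩B of size k ≤ T, the number of pairs (I,J) ∈ 𝒬 with L ⊆ I equals C(2T−k, T−k), and for disjoint L, M ⊆ A∪B with |L∩B| + |M∩B| = k ≤ T, the number of pairs with L∪M ⊆ I equals C(2T−k, T−k) while the number with L ⊆ I and M ⊆ J equals C(2T−k, T−|L∩B|); hence |{(I,J)∈𝒬 : L∪M ⊆ I}| ≤ |{(I,J)∈𝒬 : L ⊆ I, M ⊆ J}|. -/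
open Finset
open scoped symmDiff

lemma choose_mono_of_le_half {n a b : ℕ} (hab : a ≤ b) (hb : 2*b ≤ n) :
    n.choose a ≤ n.choose b := by
  induction b, hab using Nat.le_induction with
  | base => exact le_rfl
  | succ m hm ih =>
    exact (ih (by omega)).trans (Nat.choose_le_succ_of_lt_half_left (by omega))

lemma count_supersets {α : Type*} [DecidableEq α] (B D : Finset α) (hD : D ⊆ B)
    (t : ℕ) (ht : D.card ≤ t) :
    ((B.powersetCard t).filter (fun X => D ⊆ X)).card
      = (B.card - D.card).choose (t - D.card) := by
  rw [← card_sdiff_of_subset hD, ← card_powersetCard]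
  apply card_bij' (fun X _ => X \ D) (fun Y _ => Y ∪ D)
  · intro X hX
    simp only [mem_filter, mem_powersetCard] at hX ⊢
    obtain ⟨⟨hXB, hXc⟩, hDX⟩ := hX
    constructor
    · intro a ha; simp only [mem_sdiff] at ha ⊢; exact ⟨hXB ha.1, ha.2⟩
    · rw [card_sdiff_of_subset hDX, hXc]
  · intro Y hY
    simp only [mem_filter, mem_powersetCard, mem_sdiff] at hY ⊢
    obtain ⟨hYB, hYc⟩ := hY
    have hd : Disjoint Y D := by
      rw [disjoint_left]; intro a ha; exact ((mem_sdiff.mp (hYB ha)).2)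
    refine ⟨⟨?_, ?_⟩, subset_union_right⟩
    · intro a ha
      rcases mem_union.mp ha with h | h
      · exact (mem_sdiff.mp (hYB h)).1
      · exact hD h
    · rw [card_union_of_disjoint hd, hYc]; omega
  · intro X hX
    simp only [mem_filter, mem_powersetCard] at hX
    exact sdiff_union_of_subset hX.2
  · intro Y hY
    simp only [mem_powersetCard] at hY
    have hd : Disjoint Y D := by
      rw [disjoint_left]; intro a ha; exact ((mem_sdiff.mp (hY.1 ha)).2)
    exact union_sdiff_cancel_right hd

lemma Q_param {N S T : ℕ} (hTS : T ≤ S)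
    (A B : Finset (Fin N)) (hAB : Disjoint A B)
    (hA : A.card = S - T) (hB : B.card = 2 * T)
    (Q : Finset (Finset (Fin N) × Finset (Fin N)))
    (hQ : Q = (univ ×ˢ univ).filter
        (fun q : Finset (Fin N) × Finset (Fin N) =>
          q.1.card = S ∧ q.2.card = S ∧ q.1 ∩ q.2 = A ∧ q.1 ∆ q.2 = B))
    (p : Finset (Fin N) × Finset (Fin N) → Prop) [DecidablePred p] :
    (Q.filter p).card
      = ((B.powersetCard T).filter (fun X => p (A ∪ X, A ∪ (B \ X)))).card := by
  subst hQ
  rw [filter_filter]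
  apply card_bij' (fun q _ => q.1 ∩ B) (fun X _ => (A ∪ X, A ∪ (B \ X)))
  · -- forward: q ↦ q.1 ∩ B lands in powerset filter
    intro q hq
    simp only [mem_filter, mem_product, mem_univ, true_and] at hq
    obtain ⟨⟨h1, h2, hint, hsym⟩, hp⟩ := hq
    have hIB : q.1 ∩ B = q.1 \ q.2 := by
      rw [← hsym]; ext a; simp only [mem_inter, mem_sdiff, mem_symmDiff]; tauto
    have hcard : (q.1 ∩ B).card = T := by
      rw [hIB]
      have := card_inter_add_card_sdiff q.1 q.2
      rw [hint, hA, h1] at this; omega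
    have hq1 : A ∪ q.1 ∩ B = q.1 := by
      rw [← hint, ← hsym]; ext a
      simp only [mem_union, mem_inter, mem_symmDiff]; tauto
    have hq2 : A ∪ B \ (q.1 ∩ B) = q.2 := by
      rw [← hint, ← hsym]; ext a
      simp only [mem_union, mem_inter, mem_sdiff, mem_symmDiff]; tauto
    simp only [mem_filter, mem_powersetCard]
    refine ⟨⟨inter_subset_right, hcard⟩, ?_⟩
    rw [hq1, hq2]; exact hp
  · -- backward
    intro X hX
    simp only [mem_filter, mem_powersetCard] at hX
    obtain ⟨⟨hXB, hXc⟩, hp⟩ := hX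
    have hAX : Disjoint A X := hAB.mono_right hXB
    have hABX : Disjoint A (B \ X) := hAB.mono_right sdiff_subset
    simp only [mem_filter, mem_product, mem_univ, true_and]
    refine ⟨⟨?_, ?_, ?_, ?_⟩, hp⟩
    · rw [card_union_of_disjoint hAX, hA, hXc]; omega
    · rw [card_union_of_disjoint hABX, hA, card_sdiff_of_subset hXB, hB, hXc]; omega
    · rw [← union_inter_distrib_left, inter_sdiff_self, union_empty]
    · ext a
      have h1 : a ∈ A → a ∉ B := fun h hb => disjoint_left.mp hAB h hb
      have h2 : a ∈ X → a ∈ B := fun h => hXB h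
      simp only [mem_symmDiff, mem_union, mem_sdiff]
      tauto
  · -- left inverse
    intro q hq
    simp only [mem_filter, mem_product, mem_univ, true_and] at hq
    obtain ⟨⟨h1, h2, hint, hsym⟩, hp⟩ := hq
    have hq1 : A ∪ q.1 ∩ B = q.1 := by
      rw [← hint, ← hsym]; ext a
      simp only [mem_union, mem_inter, mem_symmDiff]; tauto
    have hq2 : A ∪ B \ (q.1 ∩ B) = q.2 := by
      rw [← hint, ← hsym]; ext a
      simp only [mem_union, mem_inter, mem_sdiff, mem_symmDiff]; tauto
    exact Prod.ext hq1 hq2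
  · -- right inverse
    intro X hX
    simp only [mem_filter, mem_powersetCard] at hX
    obtain ⟨⟨hXB, _⟩, _⟩ := hX
    simp only
    ext a
    have h1 : a ∈ A → a ∉ B := fun h hb => disjoint_left.mp hAB h hb
    have h2 : a ∈ X → a ∈ B := fun h => hXB h
    simp only [mem_inter, mem_union]
    tauto

theorem pair_counting {N S T : ℕ} (hTS : T ≤ S) (hS : S ≤ N)
    (A B : Finset (Fin N)) (hAB : Disjoint A B)
    (hA : A.card = S - T) (hB : B.card = 2 * T)
    (Q : Finset (Finset (Fin N) × Finset (Fin N)))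
    (hQ : Q = (univ ×ˢ univ).filter
        (fun q : Finset (Fin N) × Finset (Fin N) =>
          q.1.card = S ∧ q.2.card = S ∧ q.1 ∩ q.2 = A ∧ q.1 ∆ q.2 = B))
    (L M : Finset (Fin N)) (hL : L ⊆ A ∪ B) (hM : M ⊆ A ∪ B) (hLM : Disjoint L M)
    (hk : (L ∩ B).card + (M ∩ B).card ≤ T) :
    (Q.filter (fun q => L ⊆ q.1)).card =
      Nat.choose (2 * T - (L ∩ B).card) (T - (L ∩ B).card) ∧
    (Q.filter (fun q => L ∪ M ⊆ q.1)).card =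
      Nat.choose (2 * T - ((L ∩ B).card + (M ∩ B).card))
        (T - ((L ∩ B).card + (M ∩ B).card)) ∧
    (Q.filter (fun q => L ⊆ q.1 ∧ M ⊆ q.2)).card =
      Nat.choose (2 * T - ((L ∩ B).card + (M ∩ B).card)) (T - (L ∩ B).card) ∧
    (Q.filter (fun q => L ∪ M ⊆ q.1)).card ≤
      (Q.filter (fun q => L ⊆ q.1 ∧ M ⊆ q.2)).card := by
  have hsub : ∀ (P Y : Finset (Fin N)), P ⊆ A ∪ B → Y ⊆ B → (P ⊆ A ∪ Y ↔ P ∩ B ⊆ Y) := by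
    intro P Y hP hY
    constructor
    · intro h a ha
      rcases mem_inter.mp ha with ⟨haP, haB⟩
      rcases mem_union.mp (h haP) with h' | h'
      · exact absurd haB (disjoint_left.mp hAB h')
      · exact h'
    · intro h a ha
      rcases mem_union.mp (hP ha) with h' | h'
      · exact mem_union.mpr (Or.inl h')
      · exact mem_union.mpr (Or.inr (h (mem_inter.mpr ⟨ha, h'⟩)))
  have hdLM : Disjoint (L ∩ B) (M ∩ B) :=
    hLM.mono inter_subset_left inter_subset_left
  have hkL : (L ∩ B).card ≤ T := by omega
  have hkM : (M ∩ B).card ≤ T := by omega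
  -- count 1
  have c1 : (Q.filter (fun q => L ⊆ q.1)).card =
      Nat.choose (2 * T - (L ∩ B).card) (T - (L ∩ B).card) := by
    rw [Q_param hTS A B hAB hA hB Q hQ]
    have he : ((B.powersetCard T).filter (fun X => L ⊆ A ∪ X))
        = (B.powersetCard T).filter (fun X => L ∩ B ⊆ X) := by
      apply filter_congr
      intro X hX
      exact hsub L X hL (mem_powersetCard.mp hX).1
    simp only at he ⊢
    rw [he, count_supersets B (L ∩ B) inter_subset_right T hkL, hB]
  -- count 2
  have c2 : (Q.filter (fun q => L ∪ M ⊆ q.1)).card =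
      Nat.choose (2 * T - ((L ∩ B).card + (M ∩ B).card))
        (T - ((L ∩ B).card + (M ∩ B).card)) := by
    rw [Q_param hTS A B hAB hA hB Q hQ]
    have he : ((B.powersetCard T).filter (fun X => L ∪ M ⊆ A ∪ X))
        = (B.powersetCard T).filter (fun X => (L ∪ M) ∩ B ⊆ X) := by
      apply filter_congr
      intro X hX
      exact hsub (L ∪ M) X (union_subset hL hM) (mem_powersetCard.mp hX).1
    have hcardLM : ((L ∪ M) ∩ B).card = (L ∩ B).card + (M ∩ B).card := by
      rw [union_inter_distrib_right, card_union_of_disjoint hdLM]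
    simp only at he ⊢
    rw [he, count_supersets B ((L ∪ M) ∩ B) inter_subset_right T (by omega), hB, hcardLM]
  -- count 3
  have c3 : (Q.filter (fun q => L ⊆ q.1 ∧ M ⊆ q.2)).card =
      Nat.choose (2 * T - ((L ∩ B).card + (M ∩ B).card)) (T - (L ∩ B).card) := by
    rw [Q_param hTS A B hAB hA hB Q hQ]
    have he : ((B.powersetCard T).filter (fun X => L ⊆ A ∪ X ∧ M ⊆ A ∪ (B \ X)))
        = ((B \ (M ∩ B)).powersetCard T).filter (fun X => L ∩ B ⊆ X) := by
      ext X
      simp only [mem_filter, mem_powersetCard]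
      constructor
      · rintro ⟨⟨hXB, hXc⟩, hL', hM'⟩
        have hMB : M ∩ B ⊆ B \ X := (hsub M (B \ X) hM sdiff_subset).mp hM'
        refine ⟨⟨?_, hXc⟩, (hsub L X hL hXB).mp hL'⟩
        intro a ha
        refine mem_sdiff.mpr ⟨hXB ha, fun hc => ?_⟩
        exact (mem_sdiff.mp (hMB hc)).2 ha
      · rintro ⟨⟨hXB', hXc⟩, hLB⟩
        have hXB : X ⊆ B := hXB'.trans sdiff_subset
        refine ⟨⟨hXB, hXc⟩, (hsub L X hL hXB).mpr hLB, ?_⟩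
        refine (hsub M (B \ X) hM sdiff_subset).mpr ?_
        intro a ha
        refine mem_sdiff.mpr ⟨(mem_inter.mp ha).2, fun hc => ?_⟩
        exact (mem_sdiff.mp (hXB' hc)).2 ha
    have hDsub : L ∩ B ⊆ B \ (M ∩ B) := by
      intro a ha
      exact mem_sdiff.mpr ⟨(mem_inter.mp ha).2, fun hc => disjoint_left.mp hdLM ha hc⟩
    have hBc : (B \ (M ∩ B)).card = 2 * T - (M ∩ B).card := by
      rw [card_sdiff_of_subset inter_subset_right, hB]
    simp only at he ⊢
    rw [he, count_supersets (B \ (M ∩ B)) (L ∩ B) hDsub T hkL, hBc]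
    congr 1
    omega
  refine ⟨c1, c2, c3, ?_⟩
  rw [c2, c3]
  rcases le_or_gt (M ∩ B).card (L ∩ B).card with hc | hc
  · exact choose_mono_of_le_half (by omega) (by omega)
  · have e : T - (L ∩ B).card
        = (2 * T - ((L ∩ B).card + (M ∩ B).card)) - (T - (M ∩ B).card) := by omega
    rw [e, Nat.choose_symm (by omega)]
    exact choose_mono_of_le_half (by omega) (by omega)
end

section
/- Let A be an N×N positive semi-definite matrix and B an N×N matrix with operator norm ‖B‖. Then the 2N×2N block matrix [[‖B‖·(I ⊙ A), A ⊙ B], [(A ⊙ B)^*, ‖B‖·(I ⊙ A)]] is positive semi-definite, where I ⊙ A denotes the diagonal part of A. -/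
open scoped Matrix Matrix.Norms.L2Operator ComplexOrder

open Matrix in
lemma aux_P_psd {N : ℕ} (B : Matrix (Fin N) (Fin N) ℂ) :
    (Matrix.fromBlocks ((‖B‖ : ℂ) • 1) B Bᴴ ((‖B‖ : ℂ) • 1)).PosSemidef := by
  refine posSemidef_iff_dotProduct_mulVec.mpr ⟨?_, ?_⟩
  · unfold Matrix.IsHermitian
    rw [fromBlocks_conjTranspose]
    simp [Matrix.conjTranspose_smul, Complex.star_def, Complex.conj_ofReal]
  · intro x
    set u : Fin N → ℂ := x ∘ Sum.inl with hu
    set v : Fin N → ℂ := x ∘ Sum.inr with hv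
    have hx : star x ⬝ᵥ ((Matrix.fromBlocks ((‖B‖ : ℂ) • 1) B Bᴴ ((‖B‖ : ℂ) • 1)) *ᵥ x)
        = (‖B‖ : ℂ) * (star u ⬝ᵥ u) + star u ⬝ᵥ (B *ᵥ v)
          + star v ⬝ᵥ (Bᴴ *ᵥ u) + (‖B‖ : ℂ) * (star v ⬝ᵥ v) := by
      have hsx : star x = Sum.elim (star u) (star v) := by
        ext i; cases i <;> rfl
      rw [fromBlocks_mulVec, hsx, sumElim_dotProduct_sumElim,
        dotProduct_add, dotProduct_add]
      simp only [smul_mulVec, one_mulVec, dotProduct_smul, smul_eq_mul]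
      ring
    rw [hx]
    -- move to EuclideanSpace
    set u' : EuclideanSpace ℂ (Fin N) := (WithLp.equiv 2 _).symm u
    set v' : EuclideanSpace ℂ (Fin N) := (WithLp.equiv 2 _).symm v
    set Bv' : EuclideanSpace ℂ (Fin N) := (WithLp.equiv 2 _).symm (B *ᵥ v)
    have h1 : star u ⬝ᵥ u = ((‖u'‖ : ℝ) ^ 2 : ℝ) := by
      rw [dotProduct_comm, ← EuclideanSpace.inner_toLp_toLp, inner_self_eq_norm_sq_to_K]
      norm_cast
    have h2 : star v ⬝ᵥ v = ((‖v'‖ : ℝ) ^ 2 : ℝ) := by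
      rw [dotProduct_comm, ← EuclideanSpace.inner_toLp_toLp, inner_self_eq_norm_sq_to_K]
      norm_cast
    have ht : star u ⬝ᵥ (B *ᵥ v) = inner ℂ u' Bv' := by
      rw [EuclideanSpace.inner_eq_star_dotProduct, dotProduct_comm]
      rfl
    have ht2 : star v ⬝ᵥ (Bᴴ *ᵥ u) = star (inner ℂ u' Bv' : ℂ) := by
      rw [← ht, Matrix.star_dotProduct, Matrix.star_mulVec,
        Matrix.conjTranspose_conjTranspose, ← Matrix.dotProduct_mulVec]
    rw [h1, h2, ht, ht2]
    set t : ℂ := inner ℂ u' Bv' with htdef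
    have key : (‖B‖ : ℂ) * ((‖u'‖ : ℝ) ^ 2 : ℝ) + t + star t + (‖B‖ : ℂ) * ((‖v'‖ : ℝ) ^ 2 : ℝ)
        = ((‖B‖ * ‖u'‖ ^ 2 + 2 * t.re + ‖B‖ * ‖v'‖ ^ 2 : ℝ) : ℂ) := by
      rw [Complex.star_def]
      have hc := Complex.add_conj t
      push_cast at hc ⊢
      linear_combination hc
    rw [key, Complex.zero_le_real]
    have hBv : ‖Bv'‖ ≤ ‖B‖ * ‖v'‖ := B.l2_opNorm_mulVec v'
    have hit : ‖t‖ ≤ ‖u'‖ * ‖Bv'‖ := norm_inner_le_norm u' Bv'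
    have hre : -‖t‖ ≤ t.re := by
      have := Complex.abs_re_le_norm t
      cases' abs_le.mp this with h _
      linarith
    have h3 : -(‖u'‖ * (‖B‖ * ‖v'‖)) ≤ t.re := by
      have : ‖u'‖ * ‖Bv'‖ ≤ ‖u'‖ * (‖B‖ * ‖v'‖) :=
        mul_le_mul_of_nonneg_left hBv (norm_nonneg _)
      linarith
    nlinarith [sq_nonneg (‖u'‖ - ‖v'‖), norm_nonneg u', norm_nonneg v', norm_nonneg B,
      mul_nonneg (norm_nonneg B) (sq_nonneg (‖u'‖ - ‖v'‖))]

open Matrix in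
lemma aux_psd_sum {n ι : Type*} [Fintype n] (s : Finset ι)
    (f : ι → Matrix n n ℂ) (hf : ∀ i ∈ s, (f i).PosSemidef) :
    (∑ i ∈ s, f i).PosSemidef := by
  classical
  induction s using Finset.induction_on with
  | empty => exact ⟨Matrix.isHermitian_zero, fun x => by simp⟩
  | insert _ _ h ih =>
    rw [Finset.sum_insert h]
    exact (hf _ (Finset.mem_insert_self _ _)).add
      (ih fun i hi => hf i (Finset.mem_insert_of_mem hi))

theorem block_hadamard_posSemidef {N : ℕ} (A B : Matrix (Fin N) (Fin N) ℂ)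
    (hA : A.PosSemidef) :
    (Matrix.fromBlocks
      ((‖B‖ : ℂ) • Matrix.diagonal (fun i => A i i)) (A ⊙ B)
      ((A ⊙ B)ᴴ) ((‖B‖ : ℂ) • Matrix.diagonal (fun i => A i i))).PosSemidef := by
  classical
  obtain ⟨C, hC⟩ : ∃ C : Matrix (Fin N) (Fin N) ℂ, A = star C * C := by
    open scoped MatrixOrder in
    exact CStarAlgebra.nonneg_iff_eq_star_mul_self.mp hA.nonneg
  set c : ℂ := (‖B‖ : ℂ)
  set P : Matrix (Fin N ⊕ Fin N) (Fin N ⊕ Fin N) ℂ :=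
    Matrix.fromBlocks (c • 1) B Bᴴ (c • 1) with hP
  set Q : Fin N → Matrix (Fin N ⊕ Fin N) (Fin N ⊕ Fin N) ℂ :=
    fun k => Matrix.fromBlocks (Matrix.diagonal (C k)) 0 0 (Matrix.diagonal (C k)) with hQ
  have hAij : ∀ i j, A i j = ∑ k, star (C k i) * C k j := by
    intro i j
    rw [hC, Matrix.mul_apply]
    simp [Matrix.conjTranspose_apply, Matrix.star_apply]
  have hrep : (Matrix.fromBlocks
      (c • Matrix.diagonal (fun i => A i i)) (A ⊙ B)
      ((A ⊙ B)ᴴ) (c • Matrix.diagonal (fun i => A i i)))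
      = ∑ k, (Q k)ᴴ * P * Q k := by
    ext i j
    rcases i with i | i <;> rcases j with j | j <;>
      simp only [Matrix.sum_apply, hQ, hP, Matrix.fromBlocks_conjTranspose,
        Matrix.fromBlocks_multiply, Matrix.conjTranspose_zero, Matrix.diagonal_conjTranspose,
        Matrix.fromBlocks_apply₁₁, Matrix.fromBlocks_apply₁₂, Matrix.fromBlocks_apply₂₁,
        Matrix.fromBlocks_apply₂₂, Matrix.smul_apply, Matrix.hadamard_apply,
        Matrix.conjTranspose_apply, Matrix.zero_mul, Matrix.mul_zero,
        zero_mul, mul_zero, add_zero, zero_add, Matrix.zero_apply,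
        Matrix.mul_diagonal, Matrix.diagonal_mul, Matrix.diagonal_apply, smul_eq_mul,
        Matrix.smul_mul, Matrix.mul_smul, Pi.star_apply]
    case inl.inl =>
      simp only [Matrix.one_apply]
      by_cases h : i = j
      · subst h
        simp only [if_true, mul_one]
        rw [hAij i i, Finset.mul_sum]
      · simp [h]
    case inl.inr =>
      rw [hAij i j, Finset.sum_mul]
      exact Finset.sum_congr rfl fun k _ => by ring
    case inr.inl =>
      have hsym : star (A j i) = A i j := by
        rw [← Matrix.conjTranspose_apply, hA.1]
      rw [star_mul', hsym, hAij i j, Finset.sum_mul]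
      exact Finset.sum_congr rfl fun k _ => by ring
    case inr.inr =>
      simp only [Matrix.one_apply]
      by_cases h : i = j
      · subst h
        simp only [if_true, mul_one]
        rw [hAij i i, Finset.mul_sum]
      · simp [h]
  rw [hrep]
  exact aux_psd_sum _ _ fun k _ => (aux_P_psd B).conjTranspose_mul_mul_same (Q k)
end

section
/- For rejective sampling with weights p_i ∈ (0,1), a set L ⊆ [N] with |L| < S, and an index k ∉ L, setting L' = L ∪ {k}, one has the semi-definite inequality (1 − π_k(S)) · E_S[1_{I∖L'} 1_{I∖L'}^* · 𝟙{L' ⊆ I}] ⪯ π_k(S) · E_{S−1}[1_{I∖L} 1_{I∖L}^* · 𝟙{L ⊆ I}]. -/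
open Finset

open scoped Matrix Matrix.Norms.L2Operator

/-- The matrix `E_S[1_{I\L} 1_{I\L}^* ⋅ 𝟙{L ⊆ I}]` of conditional second order
inclusion probabilities; for `L = ∅` this is `E_S[1_I 1_I^*]`. -/
noncomputable def condMat {N : ℕ} (p : Fin N → ℝ) (S : ℕ) (L : Finset (Fin N)) :
    Matrix (Fin N) (Fin N) ℝ :=
  Matrix.of fun i j =>
    (∑ I ∈ univ.filter (fun I => I.card = S ∧ L ⊆ I ∧ i ∈ I \ L ∧ j ∈ I \ L), PB p I) /
    (∑ I ∈ univ.filter (fun I => I.card = S), PB p I)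


namespace RejAux
variable {ι : Type*} [DecidableEq ι]

lemma prod_esymm (T : Finset ι) (w : ι → ℝ) (a b : ℕ) :
    (∑ A ∈ T.powersetCard a, ∏ i ∈ A, w i) * (∑ B ∈ T.powersetCard b, ∏ i ∈ B, w i)
      = ∑ q ∈ (T.powerset ×ˢ T.powerset).filter
          (fun q => q.1 ⊆ q.2 ∧ q.1.card + q.2.card = a + b ∧ q.1.card ≤ a ∧ q.1.card ≤ b),
          (∏ i ∈ q.1, w i) * (∏ i ∈ q.2, w i) * ((q.2.card - q.1.card).choose (a - q.1.card)) := by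
  classical
  set D := (T.powerset ×ˢ T.powerset).filter
      (fun q : Finset ι × Finset ι =>
        q.1 ⊆ q.2 ∧ q.1.card + q.2.card = a + b ∧ q.1.card ≤ a ∧ q.1.card ≤ b) with hD
  have step1 : (∑ A ∈ T.powersetCard a, ∏ i ∈ A, w i) * (∑ B ∈ T.powersetCard b, ∏ i ∈ B, w i)
      = ∑ p ∈ T.powersetCard a ×ˢ T.powersetCard b, (∏ i ∈ p.1, w i) * (∏ i ∈ p.2, w i) := by
    rw [Finset.sum_mul_sum, Finset.sum_product]
  rw [step1]
  have step2 : ∑ p ∈ T.powersetCard a ×ˢ T.powersetCard b, (∏ i ∈ p.1, w i) * (∏ i ∈ p.2, w i)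
      = ∑ σ ∈ D.sigma (fun q => (q.2 \ q.1).powersetCard (a - q.1.card)),
          (∏ i ∈ σ.1.1, w i) * (∏ i ∈ σ.1.2, w i) := by
    apply Finset.sum_nbij' (i := fun p : Finset ι × Finset ι =>
        (⟨(p.1 ∩ p.2, p.1 ∪ p.2), p.1 \ p.2⟩ : Σ _ : Finset ι × Finset ι, Finset ι))
      (j := fun σ : Σ _ : Finset ι × Finset ι, Finset ι => (σ.1.1 ∪ σ.2, σ.1.2 \ σ.2))
    · intro pr hpr
      rw [Finset.mem_product] at hpr
      obtain ⟨h1, h2⟩ := hpr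
      rw [Finset.mem_powersetCard] at h1 h2
      obtain ⟨hA, hAc⟩ := h1; obtain ⟨hB, hBc⟩ := h2
      rw [Finset.mem_sigma]
      constructor
      · rw [hD, Finset.mem_filter, Finset.mem_product, Finset.mem_powerset, Finset.mem_powerset]
        refine ⟨⟨(Finset.inter_subset_left).trans hA, Finset.union_subset hA hB⟩,
          Finset.inter_subset_union, ?_, ?_, ?_⟩
        · rw [← hAc, ← hBc]; exact Finset.card_inter_add_card_union _ _
        · rw [← hAc]; exact Finset.card_le_card Finset.inter_subset_left
        · rw [← hBc]; exact Finset.card_le_card Finset.inter_subset_right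
      · rw [Finset.mem_powersetCard]
        constructor
        · intro c hc; rw [Finset.mem_sdiff] at hc ⊢
          simp only [Finset.mem_union, Finset.mem_inter]
          exact ⟨Or.inl hc.1, fun h => hc.2 h.2⟩
        · show (pr.1 \ pr.2).card = a - (pr.1 ∩ pr.2).card
          have := Finset.card_sdiff_add_card_inter pr.1 pr.2
          have h2 : (pr.1 ∩ pr.2).card ≤ pr.1.card := Finset.card_le_card Finset.inter_subset_left
          omega
    · intro σ hσ
      rw [Finset.mem_sigma] at hσ
      obtain ⟨hq, hz⟩ := hσ
      rw [hD, Finset.mem_filter, Finset.mem_product, Finset.mem_powerset, Finset.mem_powerset] at hq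
      obtain ⟨⟨hXT, hUT⟩, hXU, hcard, hxa, hxb⟩ := hq
      rw [Finset.mem_powersetCard] at hz
      obtain ⟨hZ, hZc⟩ := hz
      have hZU : σ.2 ⊆ σ.1.2 := hZ.trans (Finset.sdiff_subset)
      have hdisj : Disjoint σ.1.1 σ.2 := by
        rw [Finset.disjoint_left]; intro c hc hc2
        exact (Finset.mem_sdiff.mp (hZ hc2)).2 hc
      rw [Finset.mem_product, Finset.mem_powersetCard, Finset.mem_powersetCard]
      have hZcard : σ.2.card ≤ σ.1.2.card := Finset.card_le_card hZU
      refine ⟨⟨Finset.union_subset (hXU.trans hUT) (hZU.trans hUT), ?_⟩,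
        ⟨(Finset.sdiff_subset).trans hUT, ?_⟩⟩
      · rw [Finset.card_union_of_disjoint hdisj]; omega
      · rw [Finset.card_sdiff_of_subset hZU]; omega
    · intro pr hpr
      have h1 : (pr.1 ∩ pr.2) ∪ (pr.1 \ pr.2) = pr.1 := by
        ext c; simp only [Finset.mem_union, Finset.mem_inter, Finset.mem_sdiff]; tauto
      have h2 : (pr.1 ∪ pr.2) \ (pr.1 \ pr.2) = pr.2 := by
        ext c; simp only [Finset.mem_union, Finset.mem_sdiff]; tauto
      simp only [h1, h2]
    · intro σ hσ
      rw [Finset.mem_sigma] at hσ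
      obtain ⟨hq, hz⟩ := hσ
      rw [hD, Finset.mem_filter, Finset.mem_product] at hq
      obtain ⟨_, hXU, _⟩ := hq
      rw [Finset.mem_powersetCard] at hz
      obtain ⟨hZ, _⟩ := hz
      have hXU' : ∀ c, c ∈ σ.1.1 → c ∈ σ.1.2 := fun c hc => hXU hc
      have hZ' : ∀ c, c ∈ σ.2 → c ∈ σ.1.2 ∧ c ∉ σ.1.1 := fun c hc =>
        Finset.mem_sdiff.mp (hZ hc)
      have e1 : (σ.1.1 ∪ σ.2) ∩ (σ.1.2 \ σ.2) = σ.1.1 := by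
        ext c
        simp only [Finset.mem_inter, Finset.mem_union, Finset.mem_sdiff]
        constructor
        · rintro ⟨h1 | h1, _, h3⟩
          · exact h1
          · exact absurd h1 h3
        · intro hc
          exact ⟨Or.inl hc, hXU' c hc, fun h => (hZ' c h).2 hc⟩
      have e2 : (σ.1.1 ∪ σ.2) ∪ (σ.1.2 \ σ.2) = σ.1.2 := by
        ext c
        simp only [Finset.mem_union, Finset.mem_sdiff]
        constructor
        · rintro ((h | h) | ⟨h, _⟩)
          · exact hXU' c h
          · exact (hZ' c h).1
          · exact h
        · intro hc
          by_cases hcz : c ∈ σ.2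
          · exact Or.inl (Or.inr hcz)
          · exact Or.inr ⟨hc, hcz⟩
      have e3 : (σ.1.1 ∪ σ.2) \ (σ.1.2 \ σ.2) = σ.2 := by
        ext c
        simp only [Finset.mem_union, Finset.mem_sdiff, not_and, not_not]
        constructor
        · rintro ⟨h1 | h1, h2⟩
          · exact absurd (h2 (hXU' c h1)) (fun h => (hZ' c h).2 h1)
          · exact h1
        · intro hc
          exact ⟨Or.inr hc, fun _ => hc⟩
      obtain ⟨⟨X, U⟩, Z⟩ := σ
      simp only at e1 e2 e3 ⊢
      simp [e1, e2, e3]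
    · intro pr hpr
      simp only
      rw [← Finset.prod_union_inter]
      ring
  rw [step2, Finset.sum_sigma]
  apply Finset.sum_congr rfl
  intro q hq
  rw [hD, Finset.mem_filter] at hq
  obtain ⟨-, hsub, hcard, hxa, hxb⟩ := hq
  simp only [Finset.sum_const, Finset.card_powersetCard, Finset.card_sdiff_of_subset hsub, nsmul_eq_mul]
  ring

lemma esymm_sq_le (T : Finset ι) (w : ι → ℝ) (hw : ∀ i, 0 ≤ w i) (t : ℕ) :
    (∑ A ∈ T.powersetCard (t+2), ∏ i ∈ A, w i) * (∑ B ∈ T.powersetCard t, ∏ i ∈ B, w i)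
      ≤ (∑ A ∈ T.powersetCard (t+1), ∏ i ∈ A, w i) *
        (∑ B ∈ T.powersetCard (t+1), ∏ i ∈ B, w i) := by
  classical
  rw [prod_esymm, prod_esymm]
  have hnn : ∀ q : Finset ι × Finset ι, ∀ n : ℕ,
      0 ≤ (∏ i ∈ q.1, w i) * (∏ i ∈ q.2, w i) * (n : ℝ) := by
    intro q n
    have h1 : 0 ≤ ∏ i ∈ q.1, w i := Finset.prod_nonneg fun i _ => hw i
    have h2 : 0 ≤ ∏ i ∈ q.2, w i := Finset.prod_nonneg fun i _ => hw i
    positivity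
  calc ∑ q ∈ (T.powerset ×ˢ T.powerset).filter
          (fun q => q.1 ⊆ q.2 ∧ q.1.card + q.2.card = (t+2) + t ∧ q.1.card ≤ t+2 ∧ q.1.card ≤ t),
          (∏ i ∈ q.1, w i) * (∏ i ∈ q.2, w i) * ((q.2.card - q.1.card).choose (t+2 - q.1.card))
      ≤ ∑ q ∈ (T.powerset ×ˢ T.powerset).filter
          (fun q => q.1 ⊆ q.2 ∧ q.1.card + q.2.card = (t+2) + t ∧ q.1.card ≤ t+2 ∧ q.1.card ≤ t),
          (∏ i ∈ q.1, w i) * (∏ i ∈ q.2, w i) * ((q.2.card - q.1.card).choose (t+1 - q.1.card)) := by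
        apply Finset.sum_le_sum
        intro q hq
        rw [Finset.mem_filter] at hq
        obtain ⟨-, hsub, hcard, hxa, hxb⟩ := hq
        have hd : q.2.card - q.1.card = 2 * (t + 1 - q.1.card) := by omega
        have h1 : t + 2 - q.1.card = (t + 1 - q.1.card) + 1 := by omega
        have h2 : (2 * (t + 1 - q.1.card)) / 2 = t + 1 - q.1.card := by omega
        have hch : ((q.2.card - q.1.card).choose (t+2 - q.1.card))
            ≤ ((q.2.card - q.1.card).choose (t+1 - q.1.card)) := by
          rw [hd, h1]
          calc (2 * (t + 1 - q.1.card)).choose ((t + 1 - q.1.card) + 1)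
              ≤ (2 * (t + 1 - q.1.card)).choose ((2 * (t + 1 - q.1.card)) / 2) :=
                Nat.choose_le_middle _ _
            _ = (2 * (t + 1 - q.1.card)).choose (t + 1 - q.1.card) := by rw [h2]
        have h1' : 0 ≤ ∏ i ∈ q.1, w i := Finset.prod_nonneg fun i _ => hw i
        have h2' : 0 ≤ ∏ i ∈ q.2, w i := Finset.prod_nonneg fun i _ => hw i
        have := mul_nonneg h1' h2'
        exact mul_le_mul_of_nonneg_left (Nat.cast_le.mpr hch) this
    _ ≤ ∑ q ∈ (T.powerset ×ˢ T.powerset).filter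
          (fun q => q.1 ⊆ q.2 ∧ q.1.card + q.2.card = (t+1) + (t+1) ∧ q.1.card ≤ t+1 ∧ q.1.card ≤ t+1),
          (∏ i ∈ q.1, w i) * (∏ i ∈ q.2, w i) * ((q.2.card - q.1.card).choose (t+1 - q.1.card)) := by
        apply Finset.sum_le_sum_of_subset_of_nonneg
        · intro q hq
          rw [Finset.mem_filter] at hq ⊢
          obtain ⟨hmem, hsub, hcard, hxa, hxb⟩ := hq
          exact ⟨hmem, hsub, by omega, by omega, by omega⟩
        · intro q _ _
          exact hnn q _

lemma insert_sdiff_insert_eq {k : ι} {J L : Finset ι} (hkJ : k ∉ J) :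
    insert k J \ insert k L = J \ L := by
  ext c
  simp only [Finset.mem_sdiff, Finset.mem_insert, not_or]
  constructor
  · rintro ⟨hc1 | hc1, hc2, hc3⟩
    · exact absurd hc1 hc2
    · exact ⟨hc1, hc3⟩
  · rintro ⟨hcJ, hcL⟩
    exact ⟨Or.inr hcJ, fun h => hkJ (h ▸ hcJ), hcL⟩

end RejAux

namespace RejAux
variable {N : ℕ}

lemma PB_pos (p : Fin N → ℝ) (hp : ∀ i, p i ∈ Set.Ioo (0:ℝ) 1) (I : Finset (Fin N)) :
    0 < PB p I :=
  mul_pos (Finset.prod_pos fun i _ => (hp i).1)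
    (Finset.prod_pos fun j _ => by linarith [(hp j).2])

lemma Z_pos (p : Fin N → ℝ) (hp : ∀ i, p i ∈ Set.Ioo (0:ℝ) 1) {m : ℕ} (hm : m ≤ N) :
    0 < ∑ I ∈ univ.filter (fun I : Finset (Fin N) => I.card = m), PB p I := by
  obtain ⟨I, hIsub, hIcard⟩ := Finset.exists_subset_card_eq
    (show m ≤ (univ : Finset (Fin N)).card by simpa using hm)
  exact Finset.sum_pos (fun J _ => PB_pos p hp J)
    ⟨I, Finset.mem_filter.mpr ⟨Finset.mem_univ I, hIcard⟩⟩

lemma PB_insert (p : Fin N → ℝ) (hp : ∀ i, p i ∈ Set.Ioo (0:ℝ) 1) {k : Fin N}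
    {J : Finset (Fin N)} (hkJ : k ∉ J) :
    PB p (insert k J) = (p k / (1 - p k)) * PB p J := by
  have hkc : k ∈ Jᶜ := Finset.mem_compl.mpr hkJ
  have hne : (1 : ℝ) - p k ≠ 0 := by have := (hp k).2; linarith
  unfold PB
  rw [Finset.prod_insert hkJ, Finset.compl_insert,
    ← Finset.mul_prod_erase _ (fun j => 1 - p j) hkc]
  field_simp

lemma sum_erase_bij (k : Fin N) (Q : Finset (Fin N) → Prop) [DecidablePred Q]
    (f : Finset (Fin N) → ℝ) :
    ∑ I ∈ univ.filter (fun I => Q I ∧ k ∈ I), f I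
      = ∑ J ∈ univ.filter (fun J => k ∉ J ∧ Q (insert k J)), f (insert k J) := by
  apply Finset.sum_nbij' (i := fun I => I.erase k) (j := fun J => insert k J)
  · intro I hI
    rw [Finset.mem_filter] at hI ⊢
    obtain ⟨-, hQ, hkI⟩ := hI
    rw [Finset.insert_erase hkI]
    exact ⟨Finset.mem_univ _, Finset.notMem_erase k I, hQ⟩
  · intro J hJ
    rw [Finset.mem_filter] at hJ ⊢
    exact ⟨Finset.mem_univ _, hJ.2.2, Finset.mem_insert_self k J⟩
  · intro I hI
    rw [Finset.mem_filter] at hI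
    exact Finset.insert_erase hI.2.2
  · intro J hJ
    rw [Finset.mem_filter] at hJ
    exact Finset.erase_insert hJ.2.1
  · intro I hI
    rw [Finset.mem_filter] at hI
    rw [Finset.insert_erase hI.2.2]

lemma quadform (p : Fin N → ℝ) (S' : ℕ) (L : Finset (Fin N)) (x : Fin N → ℝ) :
    x ⬝ᵥ (condMat p S' L).mulVec x
      = (∑ I ∈ univ.filter (fun I => I.card = S' ∧ L ⊆ I), PB p I * (∑ i ∈ I \ L, x i) ^ 2)
        / (∑ I ∈ univ.filter (fun I : Finset (Fin N) => I.card = S'), PB p I) := by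
  classical
  set Z := ∑ I ∈ univ.filter (fun I : Finset (Fin N) => I.card = S'), PB p I with hZ
  have expand : x ⬝ᵥ (condMat p S' L).mulVec x
      = ∑ i, ∑ j, x i * ((∑ I ∈ univ.filter (fun I =>
          I.card = S' ∧ L ⊆ I ∧ i ∈ I \ L ∧ j ∈ I \ L), PB p I) / Z * x j) := by
    simp only [dotProduct, Matrix.mulVec, condMat, Matrix.of_apply, Finset.mul_sum]
    rfl
  rw [expand]
  have step : ∀ i j, x i * ((∑ I ∈ univ.filter (fun I =>
          I.card = S' ∧ L ⊆ I ∧ i ∈ I \ L ∧ j ∈ I \ L), PB p I) / Z * x j)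
      = (x i * (∑ I ∈ univ.filter (fun I =>
          I.card = S' ∧ L ⊆ I ∧ i ∈ I \ L ∧ j ∈ I \ L), PB p I) * x j) * Z⁻¹ := by
    intro i j; field_simp
  simp_rw [step, ← Finset.sum_mul]
  rw [div_eq_mul_inv]
  congr 1
  have hF : ∀ i j, (∑ I ∈ univ.filter (fun I =>
        I.card = S' ∧ L ⊆ I ∧ i ∈ I \ L ∧ j ∈ I \ L), PB p I)
      = ∑ I ∈ univ.filter (fun I => I.card = S' ∧ L ⊆ I),
          (if i ∈ I \ L ∧ j ∈ I \ L then PB p I else 0) := by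
    intro i j
    rw [Finset.sum_filter, Finset.sum_filter]
    apply Finset.sum_congr rfl
    intro I _
    by_cases h1 : I.card = S' <;> by_cases h2 : L ⊆ I <;>
      by_cases h3 : i ∈ I \ L <;> by_cases h4 : j ∈ I \ L <;> simp [h1, h2, h3, h4]
  simp_rw [hF, Finset.mul_sum, Finset.sum_mul]
  have swap1 : ∀ i : Fin N, (∑ j, ∑ I ∈ univ.filter (fun I => I.card = S' ∧ L ⊆ I),
      x i * (if i ∈ I \ L ∧ j ∈ I \ L then PB p I else 0) * x j)
      = ∑ I ∈ univ.filter (fun I => I.card = S' ∧ L ⊆ I),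
        ∑ j, x i * (if i ∈ I \ L ∧ j ∈ I \ L then PB p I else 0) * x j :=
    fun i => Finset.sum_comm
  simp_rw [swap1]
  rw [Finset.sum_comm]
  apply Finset.sum_congr rfl
  intro I _
  have hterm : ∀ i j, x i * (if i ∈ I \ L ∧ j ∈ I \ L then PB p I else 0) * x j
      = ((if i ∈ I \ L then x i else 0) * (if j ∈ I \ L then x j else 0)) * PB p I := by
    intro i j
    by_cases h1 : i ∈ I \ L <;> by_cases h2 : j ∈ I \ L <;> simp [h1, h2] <;> ring
  simp_rw [hterm, ← Finset.sum_mul, ← Finset.sum_mul_sum]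
  rw [Finset.sum_ite_mem, Finset.univ_inter]
  ring

end RejAux

theorem conditional_inclusion_matrix_single_step {N S : ℕ} (p : Fin N → ℝ)
    (hp : ∀ i, p i ∈ Set.Ioo (0 : ℝ) 1) (hS : 2 ≤ S) (hSN : S ≤ N)
    (L : Finset (Fin N)) (hL : L.card + 2 ≤ S) (k : Fin N) (hk : k ∉ L) :
    ((incl p S {k}) • condMat p (S - 1) L -
      (1 - incl p S {k}) • condMat p S (insert k L)).PosSemidef := by
  classical
  obtain ⟨m, rfl⟩ : ∃ m, S = m + 2 := ⟨S - 2, by omega⟩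
  rw [show m + 2 - 1 = m + 1 from rfl]
  set wk : ℝ := p k / (1 - p k) with hwk
  have hpk := hp k
  have hwkpos : 0 < wk := div_pos hpk.1 (by linarith [hpk.2])
  set Z0 := ∑ I ∈ univ.filter (fun I : Finset (Fin N) => I.card = m + 2), PB p I with hZ0def
  set Z1 := ∑ I ∈ univ.filter (fun I : Finset (Fin N) => I.card = m + 1), PB p I with hZ1def
  have hZ0pos : 0 < Z0 := RejAux.Z_pos p hp (by omega)
  have hZ1pos : 0 < Z1 := RejAux.Z_pos p hp (by omega)
  set c0 := ∑ I ∈ univ.filter (fun I : Finset (Fin N) => I.card = m + 2 ∧ k ∉ I), PB p I with hc0def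
  set c1 := ∑ I ∈ univ.filter (fun I : Finset (Fin N) => I.card = m + 1 ∧ k ∉ I), PB p I with hc1def
  set c2 := ∑ I ∈ univ.filter (fun I : Finset (Fin N) => I.card = m ∧ k ∉ I), PB p I with hc2def
  have hc0 : 0 ≤ c0 := Finset.sum_nonneg fun I _ => (RejAux.PB_pos p hp I).le
  have hc1 : 0 ≤ c1 := Finset.sum_nonneg fun I _ => (RejAux.PB_pos p hp I).le
  have hc2 : 0 ≤ c2 := Finset.sum_nonneg fun I _ => (RejAux.PB_pos p hp I).le
  have insert_step : ∀ t : ℕ,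
      (∑ I ∈ univ.filter (fun I : Finset (Fin N) => I.card = t + 1 ∧ k ∈ I), PB p I)
        = wk * ∑ J ∈ univ.filter (fun J : Finset (Fin N) => J.card = t ∧ k ∉ J), PB p J := by
    intro t
    rw [RejAux.sum_erase_bij k (fun I => I.card = t + 1) (PB p)]
    rw [show (univ.filter fun J : Finset (Fin N) => k ∉ J ∧ (insert k J).card = t + 1)
        = univ.filter (fun J : Finset (Fin N) => J.card = t ∧ k ∉ J) from
      Finset.filter_congr fun J _ => by
        constructor
        · rintro ⟨hkJ, hc⟩
          rw [Finset.card_insert_of_notMem hkJ] at hc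
          exact ⟨by omega, hkJ⟩
        · rintro ⟨hc, hkJ⟩
          exact ⟨hkJ, by rw [Finset.card_insert_of_notMem hkJ, hc]⟩]
    rw [Finset.mul_sum]
    apply Finset.sum_congr rfl
    intro J hJ
    rw [RejAux.PB_insert p hp (Finset.mem_filter.mp hJ).2.2]
  have hsplit : ∀ t : ℕ, (∑ I ∈ univ.filter (fun I : Finset (Fin N) => I.card = t), PB p I)
      = (∑ I ∈ univ.filter (fun I : Finset (Fin N) => I.card = t ∧ k ∈ I), PB p I)
        + ∑ I ∈ univ.filter (fun I : Finset (Fin N) => I.card = t ∧ k ∉ I), PB p I := by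
    intro t
    rw [← Finset.sum_filter_add_sum_filter_not
      (univ.filter (fun I : Finset (Fin N) => I.card = t)) (fun I => k ∈ I) (PB p),
      Finset.filter_filter, Finset.filter_filter]
  have hstep2 := insert_step (m + 1)
  rw [show m + 1 + 1 = m + 2 from rfl] at hstep2
  have hZ0split : Z0 = wk * c1 + c0 := by
    rw [hZ0def, hsplit (m + 2), hstep2, hc0def, hc1def]
  have hZ1split : Z1 = wk * c2 + c1 := by
    rw [hZ1def, hsplit (m + 1), insert_step m, hc1def, hc2def]
  -- Newton / log-concavity
  set wf : Fin N → ℝ := fun i => p i / (1 - p i) with hwf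
  have hwf0 : ∀ i, 0 ≤ wf i := fun i => (div_pos (hp i).1 (by linarith [(hp i).2])).le
  set C : ℝ := ∏ j, (1 - p j) with hC
  have hne : ∀ i : Fin N, (1 : ℝ) - p i ≠ 0 := fun i => by have := (hp i).2; linarith
  have hPBw : ∀ J : Finset (Fin N), PB p J = C * ∏ i ∈ J, wf i := by
    intro J
    have h1 : (∏ i ∈ J, (1 - p i)) ≠ 0 := Finset.prod_ne_zero_iff.mpr fun i _ => hne i
    rw [hC, ← Finset.prod_mul_prod_compl J (fun j => (1 : ℝ) - p j), hwf]
    unfold PB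
    rw [Finset.prod_div_distrib]
    field_simp
  have hcw : ∀ t : ℕ, (∑ I ∈ univ.filter (fun I : Finset (Fin N) => I.card = t ∧ k ∉ I), PB p I)
      = C * ∑ A ∈ (univ.erase k).powersetCard t, ∏ i ∈ A, wf i := by
    intro t
    rw [Finset.mul_sum]
    rw [show univ.filter (fun I : Finset (Fin N) => I.card = t ∧ k ∉ I)
        = (univ.erase k).powersetCard t from by
      ext J
      simp only [Finset.mem_filter, Finset.mem_powersetCard, Finset.subset_erase,
        Finset.mem_univ, true_and, Finset.subset_univ]
      tauto]
    exact Finset.sum_congr rfl fun J _ => hPBw J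
  have hnewton : c0 * c2 ≤ c1 * c1 := by
    have hE := RejAux.esymm_sq_le (univ.erase k) wf hwf0 m
    rw [hc0def, hc1def, hc2def, hcw (m + 2), hcw (m + 1), hcw m]
    nlinarith [mul_nonneg (sq_nonneg C) (sub_nonneg.mpr hE)]
  have hkey : c0 * Z1 ≤ c1 * Z0 := by
    rw [hZ0split, hZ1split]
    nlinarith [mul_nonneg hwkpos.le (sub_nonneg.mpr hnewton)]
  have ha : (∑ I ∈ univ.filter (fun I : Finset (Fin N) => I.card = m + 2 ∧ {k} ⊆ I), PB p I)
      = wk * c1 := by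
    rw [show univ.filter (fun I : Finset (Fin N) => I.card = m + 2 ∧ {k} ⊆ I)
        = univ.filter (fun I : Finset (Fin N) => I.card = m + 2 ∧ k ∈ I) from
      Finset.filter_congr fun I _ => by simp [Finset.singleton_subset_iff]]
    rw [hstep2, hc1def]
  have halpha : incl p (m + 2) {k} = wk * c1 / Z0 := by
    unfold incl
    rw [ha, ← hZ0def]
  have hbeta : 1 - incl p (m + 2) {k} = c0 / Z0 := by
    rw [halpha]
    field_simp
    linarith [hZ0split]
  have hsym : ∀ (S' : ℕ) (L' : Finset (Fin N)), (condMat p S' L').IsHermitian := by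
    intro S' L'
    show (condMat p S' L')ᴴ = condMat p S' L'
    ext i j
    rw [Matrix.conjTranspose_apply, star_trivial]
    simp only [condMat, Matrix.of_apply]
    refine congrArg₂ (· / ·) ?_ rfl
    refine Finset.sum_congr ?_ fun _ _ => rfl
    apply Finset.filter_congr
    intro I _
    tauto
  rw [Matrix.posSemidef_iff_dotProduct_mulVec]
  constructor
  · show _ = _
    rw [Matrix.conjTranspose_sub, Matrix.conjTranspose_smul, Matrix.conjTranspose_smul,
      star_trivial, star_trivial, hsym, hsym]
  · intro x
    rw [star_trivial]
    rw [Matrix.sub_mulVec, Matrix.smul_mulVec, Matrix.smul_mulVec,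
      dotProduct_sub, dotProduct_smul, dotProduct_smul,
      smul_eq_mul, smul_eq_mul, RejAux.quadform, RejAux.quadform]
    have hTB : (∑ I ∈ univ.filter (fun I : Finset (Fin N) =>
            I.card = m + 2 ∧ insert k L ⊆ I), PB p I * (∑ i ∈ I \ insert k L, x i) ^ 2)
        = wk * ∑ J ∈ univ.filter (fun J : Finset (Fin N) => J.card = m + 1 ∧ L ⊆ J ∧ k ∉ J),
            PB p J * (∑ i ∈ J \ L, x i) ^ 2 := by
      rw [show univ.filter (fun I : Finset (Fin N) => I.card = m + 2 ∧ insert k L ⊆ I)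
          = univ.filter (fun I : Finset (Fin N) =>
              (I.card = m + 2 ∧ insert k L ⊆ I) ∧ k ∈ I) from
        Finset.filter_congr fun I _ => by
          constructor
          · intro h; exact ⟨h, h.2 (Finset.mem_insert_self k L)⟩
          · exact fun h => h.1]
      rw [RejAux.sum_erase_bij k (fun I => I.card = m + 2 ∧ insert k L ⊆ I)
        (fun I => PB p I * (∑ i ∈ I \ insert k L, x i) ^ 2)]
      rw [show (univ.filter fun J : Finset (Fin N) =>
            k ∉ J ∧ ((insert k J).card = m + 2 ∧ insert k L ⊆ insert k J))
          = univ.filter (fun J : Finset (Fin N) => J.card = m + 1 ∧ L ⊆ J ∧ k ∉ J) from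
        Finset.filter_congr fun J _ => by
          constructor
          · rintro ⟨hkJ, hc, hsub⟩
            rw [Finset.card_insert_of_notMem hkJ] at hc
            refine ⟨by omega, ?_, hkJ⟩
            have hLi : L ⊆ insert k J := (Finset.subset_insert k L).trans hsub
            exact (Finset.subset_insert_iff_of_notMem hk).mp hLi
          · rintro ⟨hc, hsub, hkJ⟩
            exact ⟨hkJ, by rw [Finset.card_insert_of_notMem hkJ, hc],
              Finset.insert_subset_insert k hsub⟩]
      rw [Finset.mul_sum]
      apply Finset.sum_congr rfl
      intro J hJ
      obtain ⟨-, -, -, hkJ⟩ := Finset.mem_filter.mp hJ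
      rw [RejAux.PB_insert p hp hkJ, RejAux.insert_sdiff_insert_eq hkJ]
      ring
    rw [hTB, hbeta, halpha, ← hZ0def, ← hZ1def]
    set TA := ∑ J ∈ univ.filter (fun J : Finset (Fin N) => J.card = m + 1 ∧ L ⊆ J),
      PB p J * (∑ i ∈ J \ L, x i) ^ 2 with hTAdef
    set TB := ∑ J ∈ univ.filter (fun J : Finset (Fin N) => J.card = m + 1 ∧ L ⊆ J ∧ k ∉ J),
      PB p J * (∑ i ∈ J \ L, x i) ^ 2 with hTBdef
    have hTB0 : 0 ≤ TB :=
      Finset.sum_nonneg fun J _ => mul_nonneg (RejAux.PB_pos p hp J).le (sq_nonneg _)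
    have hTBA : TB ≤ TA := by
      apply Finset.sum_le_sum_of_subset_of_nonneg
      · intro J hJ
        rw [Finset.mem_filter] at hJ ⊢
        exact ⟨hJ.1, hJ.2.1, hJ.2.2.1⟩
      · intro J _ _
        exact mul_nonneg (RejAux.PB_pos p hp J).le (sq_nonneg _)
    rw [sub_nonneg, div_mul_div_comm, div_mul_div_comm,
      div_le_div_iff₀ (mul_pos hZ0pos hZ0pos) (mul_pos hZ0pos hZ1pos)]
    have h1 : 0 ≤ (c1 * Z0 - c0 * Z1) * (wk * TB) * Z0 :=
      mul_nonneg (mul_nonneg (sub_nonneg.mpr hkey) (mul_nonneg hwkpos.le hTB0)) hZ0pos.le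
    have h2 : 0 ≤ c1 * Z0 * wk * (TA - TB) * Z0 :=
      mul_nonneg (mul_nonneg (mul_nonneg (mul_nonneg hc1 hZ0pos.le) hwkpos.le)
        (sub_nonneg.mpr hTBA)) hZ0pos.le
    ring_nf
    ring_nf at h1 h2
    linarith [h1, h2]
end
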